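/- Let Φ be a Young function satisfying the Δ2-condition. If (ξ_n) is a sequence in L_{Φ*} with ξ_n → 0 in probability such that (Φ*(ξ_n))_n is uniformly integrable, then there exists a subsequence (ξ_{n_k}) with sup_k |ξ_{n_k}| ∈ L_{Φ*}; moreover the whole sequence ξ_n converges to 0 in the Mackey topology τ(L_{Φ*},L_Φ). -/

import Mathlib

open MeasureTheory Filter Topology Set
open scoped ENNReal

noncomputable section

namespace OrliczPaper

variable {Ω : Type*} [MeasurableSpace Ω]

/-- A (finite, coercive) Young function: an even convex function with `Φ 0 = 0`
and `Φ x / x → ∞` as `x → ∞`. -/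
structure IsYoung (Φ : ℝ → ℝ) : Prop where
  even : ∀ x, Φ (-x) = Φ x
  convexOn : ConvexOn ℝ Set.univ Φ
  map_zero : Φ 0 = 0
  coercive : Tendsto (fun x => Φ x / x) atTop atTop

/-- The Δ₂-condition: `limsup_{x→∞} Φ(2x)/Φ(x) < ∞`, i.e. `Φ(2x) ≤ C Φ(x)`
for all large `x`. -/
def Delta2 (Φ : ℝ → ℝ) : Prop :=
  ∃ C x₀ : ℝ, ∀ x ≥ x₀, Φ (2 * x) ≤ C * Φ x

/-- The conjugate Young function `Φ*(y) = sup_x (x y − Φ x)`. -/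
def conj (Φ : ℝ → ℝ) (y : ℝ) : ℝ := ⨆ x : ℝ, x * y - Φ x

variable (P : Measure Ω)

/-- Membership in the Orlicz space `L_Φ`: a measurable function with
`E[Φ(l ξ)] < ∞` for some `l > 0`. -/
def MemOrlicz (Φ : ℝ → ℝ) (f : Ω → ℝ) : Prop :=
  Measurable f ∧ ∃ l : ℝ, 0 < l ∧ ∫⁻ ω, ENNReal.ofReal (Φ (l * f ω)) ∂P < ⊤

/-- The Orlicz space `L_Φ`, as a set of (everywhere defined) measurable functions. -/
def Orlicz (Φ : ℝ → ℝ) : Set (Ω → ℝ) := {f | MemOrlicz P Φ f}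

/-- The Luxemburg norm `‖f‖_Φ = inf {l > 0 : E[Φ(f/l)] ≤ 1}`. -/
def luxNorm (Φ : ℝ → ℝ) (f : Ω → ℝ) : ℝ :=
  sInf {l : ℝ | 0 < l ∧ ∫⁻ ω, ENNReal.ofReal (Φ (f ω / l)) ∂P ≤ 1}

/-- The Orlicz (dual) norm `‖f‖_{(Φ*)} = sup {E[g f] : E[Φ(g)] ≤ 1}`
(the Young function `Φ` here is the one of the *predual*). -/
def orliczNorm (Φ : ℝ → ℝ) (f : Ω → ℝ) : ℝ :=
  sSup {r : ℝ | ∃ g : Ω → ℝ, Measurable g ∧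
    (∫⁻ ω, ENNReal.ofReal (Φ (g ω)) ∂P) ≤ 1 ∧ r = ∫ ω, g ω * f ω ∂P}

/-- The bilinear pairing `⟨f, g⟩ = E[f g]`. -/
def pairing (f g : Ω → ℝ) : ℝ := ∫ ω, f ω * g ω ∂P

/-- The weak topology `σ(E, F)` on `E` induced by the pairing with `F`. -/
def weakT (E F : Set (Ω → ℝ)) : TopologicalSpace E :=
  TopologicalSpace.induced
    (fun ξ : E => fun η : F => pairing P (ξ : Ω → ℝ) (η : Ω → ℝ)) inferInstance

/-- The absolutely convex (convex and balanced) `σ(F,E)`-compact subsets of `F`. -/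
def dualSets (E F : Set (Ω → ℝ)) : Set (Set F) :=
  {A | Convex ℝ (Subtype.val '' A) ∧ Balanced ℝ (Subtype.val '' A) ∧
    @IsCompact _ (weakT P F E) A}

/-- The Mackey topology `τ(E, F)`: the topology on `E` of uniform convergence on
absolutely convex `σ(F,E)`-compact subsets of `F`. -/
def mackeyT (E F : Set (Ω → ℝ)) : TopologicalSpace E :=
  TopologicalSpace.induced
    (fun ξ : E => UniformOnFun.ofFun (dualSets P E F)
      (fun η : F => pairing P (ξ : Ω → ℝ) (η : Ω → ℝ)))
    inferInstance

/-- A distance generating the topology of convergence in `P`-probability. -/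
def probDist (f g : Ω → ℝ) : ℝ := ∫ ω, min |f ω - g ω| 1 ∂P

/-- The topology of convergence in probability, restricted to `E ⊆ L₀`. -/
def probT (E : Set (Ω → ℝ)) : TopologicalSpace E :=
  TopologicalSpace.generateFrom
    {U | ∃ f : E, ∃ ε : ℝ, 0 < ε ∧ U = {g : E | probDist P (f : Ω → ℝ) (g : Ω → ℝ) < ε}}

/-- `L_∞`: essentially bounded measurable functions. -/
def Linf : Set (Ω → ℝ) := {f | Measurable f ∧ ∃ C : ℝ, ∀ᵐ ω ∂P, |f ω| ≤ C}

/-- `L_1`: integrable measurable functions. -/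
def L1 : Set (Ω → ℝ) := {f | Measurable f ∧ Integrable f P}

/-- The essential supremum norm. -/
def linfNorm (f : Ω → ℝ) : ℝ := sInf {C : ℝ | 0 ≤ C ∧ ∀ᵐ ω ∂P, |f ω| ≤ C}

/-- Uniform integrability of a set of functions:
`sup_{f ∈ A} E[|f| 1_{|f| > N}] → 0`. -/
def UnifInt (A : Set (Ω → ℝ)) : Prop :=
  Tendsto (fun N : ℕ => ⨆ f ∈ A, ∫⁻ ω in {ω | (N : ℝ) < |f ω|}, ENNReal.ofReal |f ω| ∂P)
    atTop (𝓝 0)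

/-- Uniform integrability of a sequence of functions. -/
def UnifIntSeq (g : ℕ → Ω → ℝ) : Prop :=
  Tendsto (fun N : ℕ => ⨆ n, ∫⁻ ω in {ω | (N : ℝ) < |g n ω|}, ENNReal.ofReal |g n ω| ∂P)
    atTop (𝓝 0)

/-- The Cesàro means of a sequence of functions: `cesaro ξ N` is the average of
`ξ 0, …, ξ N`. -/
def cesaro (ξ : ℕ → Ω → ℝ) (N : ℕ) : Ω → ℝ :=
  fun ω => (∑ i ∈ Finset.range (N + 1), ξ i ω) / (N + 1)

/-- `sup_n |ξ n| ∈ L_Φ` (order boundedness of the sequence `ξ` in `L_Φ`). -/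
def supMem (Φ : ℝ → ℝ) (ξ : ℕ → Ω → ℝ) : Prop :=
  (∀ᵐ ω ∂P, BddAbove (Set.range fun n => |ξ n ω|)) ∧
    MemOrlicz P Φ (fun ω => ⨆ n, |ξ n ω|)

/-- `ξb` is a sequence of forward convex combinations of `ξ`:
`ξb n ∈ conv (ξ k ; k ≥ n)`. -/
def FwdConvComb (ξ ξb : ℕ → Ω → ℝ) : Prop :=
  ∀ n, ξb n ∈ convexHull ℝ {g : Ω → ℝ | ∃ k ≥ n, g = ξ k}

/-- The left derivative of a convex function. -/
def leftDeriv (Φ : ℝ → ℝ) (y : ℝ) : ℝ :=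
  ⨆ h : {h : ℝ // 0 < h}, (Φ y - Φ (y - (h : ℝ))) / (h : ℝ)

/-- `p_Φ(x) = sup_{y > x} y Φ'(y) / Φ(y)`. -/
def pPhiAt (Φ : ℝ → ℝ) (x : ℝ) : ℝ≥0∞ :=
  ⨆ y : {y : ℝ // x < y}, ENNReal.ofReal ((y : ℝ) * leftDeriv Φ (y : ℝ) / Φ (y : ℝ))

/-- `p_Φ = inf_{x ≥ 0} p_Φ(x)`. -/
def pPhi (Φ : ℝ → ℝ) : ℝ≥0∞ := ⨅ x : {x : ℝ // 0 ≤ x}, pPhiAt Φ x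

/-- `q_Φ = p_Φ / (p_Φ − 1)` (with `1/0 = ∞`). -/
def qPhi (Φ : ℝ → ℝ) : ℝ≥0∞ := pPhi Φ / (pPhi Φ - 1)

end OrliczPaper

namespace OrliczPaper

section Aux

variable {Φ : ℝ → ℝ}

variable {Φ : ℝ → ℝ}

lemma IsYoung.nonneg (hΦ : IsYoung Φ) (x : ℝ) : 0 ≤ Φ x := by
  have h := hΦ.convexOn.2 (mem_univ x) (mem_univ (-x))
    (le_of_lt one_half_pos) (le_of_lt one_half_pos) (by norm_num)
  simp only [smul_eq_mul] at h
  have : (1/2 : ℝ) * x + (1/2) * (-x) = 0 := by ring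
  rw [this, hΦ.map_zero, hΦ.even x] at h
  linarith

lemma IsYoung.bddAbove (hΦ : IsYoung Φ) (y : ℝ) :
    BddAbove (Set.range fun x => x * y - Φ x) := by
  obtain ⟨x₀, hx₀⟩ := (hΦ.coercive.eventually_ge_atTop (|y| + 1)).exists_forall_of_atTop
  refine ⟨(max x₀ 1) * |y|, ?_⟩
  rintro - ⟨x, rfl⟩
  show x * y - Φ x ≤ max x₀ 1 * |y|
  set z := max x₀ 1 with hz
  have hz1 : (1:ℝ) ≤ z := le_max_right _ _
  have hzx : x₀ ≤ z := le_max_left _ _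
  rcases le_or_gt x z with hx | hx
  · rcases le_or_gt (-z) x with hx' | hx'
    · -- |x| ≤ z
      have : x * y ≤ z * |y| := by
        calc x * y ≤ |x * y| := le_abs_self _
        _ = |x| * |y| := abs_mul _ _
        _ ≤ z * |y| := by
            apply mul_le_mul_of_nonneg_right _ (abs_nonneg y)
            rw [abs_le]; constructor <;> linarith
      linarith [hΦ.nonneg x]
    · -- x < -z ≤ -1, so -x > z ≥ x₀
      have h1 : Φ (-x) / (-x) ≥ |y| + 1 := hx₀ (-x) (by linarith)
      have hxneg : (0:ℝ) < -x := by linarith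
      have h2 : Φ (-x) ≥ (|y| + 1) * (-x) := by
        rw [ge_iff_le, ← le_div_iff₀ hxneg]; exact h1
      have h3 : Φ x = Φ (-x) := (hΦ.even x).symm
      have : x * y - Φ x ≤ x * y + (|y| + 1) * x := by rw [h3]; nlinarith
      have h4 : x * y + (|y| + 1) * x ≤ 0 := by
        have h6 : x * y ≤ |x| * |y| := by
          calc x * y ≤ |x * y| := le_abs_self _
          _ = |x| * |y| := abs_mul _ _
        have hax : |x| = -x := abs_of_neg (by linarith)
        rw [hax] at h6
        nlinarith [h6]
      have h5 : (0:ℝ) ≤ z * |y| := by positivity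
      linarith
  · -- x > z ≥ x₀
    have h1 : Φ x / x ≥ |y| + 1 := hx₀ x (by linarith)
    have hxpos : (0:ℝ) < x := by linarith
    have h2 : (|y| + 1) * x ≤ Φ x := by rw [← le_div_iff₀ hxpos]; exact h1
    have : x * y ≤ x * |y| := by
      have := le_abs_self y; nlinarith
    have h5 : (0:ℝ) ≤ z * |y| := by positivity
    nlinarith [this, h2, h5]

lemma IsYoung.le_conj (hΦ : IsYoung Φ) (x y : ℝ) : x * y - Φ x ≤ conj Φ y :=
  le_ciSup (hΦ.bddAbove y) x

lemma IsYoung.young (hΦ : IsYoung Φ) (x y : ℝ) : x * y ≤ Φ x + conj Φ y := by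
  have := hΦ.le_conj x y; linarith

lemma IsYoung.conj_nonneg (hΦ : IsYoung Φ) (y : ℝ) : 0 ≤ conj Φ y := by
  have := hΦ.le_conj 0 y; simpa [hΦ.map_zero] using this

lemma IsYoung.conj_zero (hΦ : IsYoung Φ) : conj Φ 0 = 0 := by
  refine le_antisymm ?_ (hΦ.conj_nonneg 0)
  refine ciSup_le fun x => ?_
  have := hΦ.nonneg x; linarith

lemma IsYoung.conj_even (hΦ : IsYoung Φ) (y : ℝ) : conj Φ (-y) = conj Φ y := by
  have key : ∀ u : ℝ, conj Φ (-u) ≤ conj Φ u := by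
    intro u
    refine ciSup_le fun x => ?_
    have : x * -u - Φ x = (-x) * u - Φ (-x) := by rw [hΦ.even]; ring
    rw [this]; exact hΦ.le_conj (-x) u
  have h2 := key (-y); rw [neg_neg] at h2
  exact le_antisymm (key y) h2

lemma IsYoung.conj_mono (hΦ : IsYoung Φ) {u v : ℝ} (hu : 0 ≤ u) (huv : u ≤ v) :
    conj Φ u ≤ conj Φ v := by
  refine ciSup_le fun x => ?_
  have h1 : x * u - Φ x ≤ |x| * u - Φ |x| := by
    have hx : Φ |x| = Φ x := by
      rcases abs_choice x with h | h <;> rw [h]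
      exact hΦ.even x
    rw [hx]
    have : x * u ≤ |x| * u := by
      have := le_abs_self x; nlinarith
    linarith
  have h2 : |x| * u - Φ |x| ≤ |x| * v - Φ |x| := by
    have : |x| * u ≤ |x| * v := by
      apply mul_le_mul_of_nonneg_left huv (abs_nonneg x)
    linarith
  calc x * u - Φ x ≤ |x| * v - Φ |x| := by linarith
    _ ≤ conj Φ v := hΦ.le_conj |x| v

lemma IsYoung.conj_mono_abs (hΦ : IsYoung Φ) {u v : ℝ} (h : |u| ≤ |v|) :
    conj Φ u ≤ conj Φ v := by
  have h1 : conj Φ u = conj Φ |u| := by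
    rcases abs_choice u with he | he <;> rw [he]
    exact (hΦ.conj_even u).symm
  have h2 : conj Φ v = conj Φ |v| := by
    rcases abs_choice v with he | he <;> rw [he]
    exact (hΦ.conj_even v).symm
  rw [h1, h2]
  exact hΦ.conj_mono (abs_nonneg u) h

lemma IsYoung.conj_convexOn (hΦ : IsYoung Φ) : ConvexOn ℝ Set.univ (conj Φ) := by
  refine ⟨convex_univ, fun y₁ _ y₂ _ a b ha hb hab => ?_⟩
  refine ciSup_le fun x => ?_
  have h1 : x * (a • y₁ + b • y₂) - Φ x
      = a * (x * y₁ - Φ x) + b * (x * y₂ - Φ x) := by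
    simp only [smul_eq_mul]; linear_combination Φ x * hab
  rw [h1]
  have := hΦ.le_conj x y₁
  have := hΦ.le_conj x y₂
  simp only [smul_eq_mul]
  nlinarith

lemma IsYoung.conj_continuous (hΦ : IsYoung Φ) : Continuous (conj Φ) := by
  rw [← continuousOn_univ]
  exact hΦ.conj_convexOn.continuousOn isOpen_univ


lemma IsYoung.continuous (hΦ : IsYoung Φ) : Continuous Φ := by
  rw [← continuousOn_univ]
  exact hΦ.convexOn.continuousOn isOpen_univ

lemma IsYoung.map_abs (hΦ : IsYoung Φ) (x : ℝ) : Φ |x| = Φ x := by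
  rcases abs_choice x with h | h <;> rw [h]
  exact hΦ.even x

lemma IsYoung.conj_abs (hΦ : IsYoung Φ) (u : ℝ) : conj Φ |u| = conj Φ u := by
  rcases abs_choice u with h | h <;> rw [h]
  exact hΦ.conj_even u

end Aux

private def pe : ℕ ≃ ℕ × ℕ := (Denumerable.eqv (ℕ × ℕ)).symm

private def blk (p : ℕ) : Set ℕ := {m | (pe m).1 = p}

private def eqBlk (p : ℕ) : ℕ ≃ ↥(blk p) where
  toFun q := ⟨pe.symm (p, q), by simp [blk]⟩
  invFun m := (pe (m : ℕ)).2
  left_inv q := by simp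
  right_inv m := by
    apply Subtype.ext
    have h : (pe (m : ℕ)).1 = p := m.2
    have h2 : (p, (pe (m : ℕ)).2) = pe (m : ℕ) := Prod.ext h.symm rfl
    simp only [h2, Equiv.symm_apply_apply]

private lemma blk_disjoint {p q : ℕ} (h : p ≠ q) : Disjoint (blk p) (blk q) := by
  rw [Set.disjoint_iff]
  rintro m ⟨h1, h2⟩
  exact absurd (h1.symm.trans h2) h

private lemma blk_infinite (p : ℕ) : (blk p).Infinite := by
  apply Set.infinite_of_injective_forall_mem (f := fun q : ℕ => pe.symm (p, q))
  · intro a b hab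
    have := congrArg pe hab
    simpa using this
  · intro q; simp [blk]

private lemma tsum_blk (f : ℕ → ℝ≥0∞) (p : ℕ) :
    ∑' m, (blk p).indicator f m = ∑' q, f (pe.symm (p, q)) := by
  rw [← tsum_subtype]
  exact ((eqBlk p).tsum_eq (fun m : ↥(blk p) => f (m : ℕ))).symm

private lemma tsum_blocks (f : ℕ → ℝ≥0∞) :
    ∑' m, f m = ∑' p, ∑' m, (blk p).indicator f m := by
  calc ∑' m, f m = ∑' pq : ℕ × ℕ, f (pe.symm pq) := (pe.symm.tsum_eq f).symm
    _ = ∑' p, ∑' q, f (pe.symm (p, q)) := by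
        rw [← ENNReal.tsum_prod]
    _ = ∑' p, ∑' m, (blk p).indicator f m := tsum_congr fun p => (tsum_blk f p).symm

/-- Matrix form of Rosenthal's lemma, by induction. -/
private lemma rosenthal_aux (ε : ℝ≥0∞) (hε0 : ε ≠ 0) (hεtop : ε ≠ ∞) :
    ∀ (n : ℕ) (K : ℝ≥0∞) (a : ℕ → ℕ → ℝ≥0∞), K ≤ n * ε → (∀ i, ∑' m, a i m ≤ K) →
      ∃ M : Set ℕ, M.Infinite ∧ ∀ i ∈ M, ∑' m, (M \ {i}).indicator (a i) m ≤ ε := by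
  intro n
  induction n with
  | zero =>
    intro K a hK hrow
    refine ⟨Set.univ, Set.infinite_univ, fun i _ => ?_⟩
    have h1 : ∑' m, (Set.univ \ {i}).indicator (a i) m ≤ ∑' m, a i m :=
      ENNReal.tsum_le_tsum fun m => Set.indicator_le_self _ _ m
    have h2 : K = 0 := le_antisymm (by simpa using hK) (zero_le)
    exact le_trans (h1.trans (hrow i)) (by simp [h2])
  | succ n ih =>
    intro K a hK hrow
    by_cases hA : ∃ p : ℕ, {i ∈ blk p | ∑' m, ((blk p \ {i}).indicator (a i)) m ≤ ε}.Infinite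
    · obtain ⟨p, hp⟩ := hA
      refine ⟨_, hp, fun i hi => ?_⟩
      refine le_trans (ENNReal.tsum_le_tsum fun m => ?_) hi.2
      apply Set.indicator_le_indicator_of_subset
      · intro x hx
        exact ⟨(hx.1).1, hx.2⟩
      · intro x; exact zero_le
    · push_neg at hA
      -- choose a heavy representative in each block
      have hchoice : ∀ p : ℕ, ∃ i ∈ blk p, ε < ∑' m, ((blk p \ {i}).indicator (a i)) m := by
        intro p
        have h1 : ((blk p) \ {i ∈ blk p | ∑' m, ((blk p \ {i}).indicator (a i)) m ≤ ε}).Infinite :=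
          (blk_infinite p).diff (hA p)
        obtain ⟨i, hi⟩ := h1.nonempty
        refine ⟨i, hi.1, ?_⟩
        by_contra hcon
        push_neg at hcon
        exact hi.2 ⟨hi.1, hcon⟩
      choose idx hidx hheavy using hchoice
      have hidxinj : Function.Injective idx := by
        intro p q hpq
        by_contra hne
        exact (blk_disjoint hne).ne_of_mem (hidx p) (hidx q) hpq
      -- the reduced matrix
      set b : ℕ → ℕ → ℝ≥0∞ := fun p q =>
        if q = p then 0 else ∑' m, (blk q).indicator (a (idx p)) m with hb
      have hbrow : ∀ p, ∑' q, b p q ≤ K - ε := by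
        intro p
        refine ENNReal.le_sub_of_add_le_left hεtop ?_
        rw [add_comm]
        have h1 : ∑' q, b p q + (∑' m, (blk p).indicator (a (idx p)) m)
            = ∑' q, ∑' m, (blk q).indicator (a (idx p)) m := by
          rw [ENNReal.tsum_eq_add_tsum_ite
            (f := fun q => ∑' m, (blk q).indicator (a (idx p)) m) p, add_comm]
          congr 1
          exact tsum_congr fun q => by by_cases hq : q = p <;> simp [hb, hq]
        have h2 : ε ≤ ∑' m, (blk p).indicator (a (idx p)) m := by
          refine le_trans (hheavy p).le (ENNReal.tsum_le_tsum fun m => ?_)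
          apply Set.indicator_le_indicator_of_subset (Set.diff_subset) (fun _ => zero_le)
        calc ∑' q, b p q + ε ≤ ∑' q, b p q + ∑' m, (blk p).indicator (a (idx p)) m := by
              exact add_le_add_right h2 _
          _ = ∑' q, ∑' m, (blk q).indicator (a (idx p)) m := h1
          _ = ∑' m, a (idx p) m := (tsum_blocks _).symm
          _ ≤ K := hrow _
      have hKe : K - ε ≤ n * ε := by
        have : ((n:ℝ≥0∞) + 1) * ε = n * ε + ε := by ring
        calc K - ε ≤ ((n+1 : ℕ) : ℝ≥0∞) * ε - ε := tsub_le_tsub_right hK ε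
          _ = (n * ε + ε) - ε := by push_cast [this]; ring_nf
          _ = n * ε := ENNReal.add_sub_cancel_right hεtop
      obtain ⟨M', hM'inf, hM'⟩ := ih (K - ε) b hKe hbrow
      refine ⟨idx '' M', hM'inf.image (hidxinj.injOn), ?_⟩
      rintro - ⟨p, hp, rfl⟩
      have himg : idx '' M' \ {idx p} = idx '' (M' \ {p}) := by
        rw [← Set.image_singleton, ← Set.image_diff hidxinj]
      rw [himg]
      have h3 : ∑' m, (idx '' (M' \ {p})).indicator (a (idx p)) m
          = ∑' q : ↥(M' \ {p}), a (idx p) (idx q) := by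
        rw [← tsum_subtype]
        exact tsum_image (fun m : ℕ => a (idx p) m) (hidxinj.injOn)
      rw [h3]
      have h4 : ∀ q : ↥(M' \ {p}), a (idx p) (idx q) ≤ b p (q : ℕ) := by
        rintro ⟨q, hq⟩
        have hqp : q ≠ p := hq.2
        have h5 : a (idx p) (idx q) = (blk q).indicator (a (idx p)) (idx q) := by
          rw [Set.indicator_of_mem (hidx q)]
        calc a (idx p) (idx q) = (blk q).indicator (a (idx p)) (idx q) := h5
          _ ≤ ∑' m, (blk q).indicator (a (idx p)) m := ENNReal.le_tsum _
          _ = b p q := by rw [hb]; simp [hqp]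
      calc ∑' q : ↥(M' \ {p}), a (idx p) (idx q)
          ≤ ∑' q : ↥(M' \ {p}), b p (q : ℕ) := ENNReal.tsum_le_tsum h4
        _ = ∑' q, (M' \ {p}).indicator (b p) q := tsum_subtype _ _
        _ ≤ ε := hM' p hp

lemma rosenthal {K : ℝ≥0∞} (hK : K ≠ ∞) (a : ℕ → ℕ → ℝ≥0∞) (hrow : ∀ i, ∑' m, a i m ≤ K)
    {ε : ℝ≥0∞} (hε0 : ε ≠ 0) (hεtop : ε ≠ ∞) :
    ∃ M : Set ℕ, M.Infinite ∧ ∀ i ∈ M, ∑' m, (M \ {i}).indicator (a i) m ≤ ε := by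
  obtain ⟨n, hn⟩ := ENNReal.exists_nat_gt (show K / ε ≠ ∞ by
    intro h
    rw [ENNReal.div_eq_top] at h
    rcases h with ⟨-, h0⟩ | ⟨htop, -⟩
    · exact hε0 h0
    · exact hK htop)
  have hKn : K ≤ n * ε := by
    have h1 : K / ε ≤ (n : ℝ≥0∞) := hn.le
    calc K = K / ε * ε := by rw [ENNReal.div_mul_cancel hε0 hεtop]
      _ ≤ n * ε := mul_le_mul_left h1 _
  exact rosenthal_aux ε hε0 hεtop n K a hKn hrow


section Aux2

variable {Ω : Type*} [MeasurableSpace Ω]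
variable (P : Measure Ω)

lemma integrable_of_nonneg_lintegral {g : Ω → ℝ} (hg : Measurable g) (h0 : ∀ ω, 0 ≤ g ω)
    (h : ∫⁻ ω, ENNReal.ofReal (g ω) ∂P < ⊤) : Integrable g P := by
  refine ⟨hg.aestronglyMeasurable, ?_⟩
  rw [hasFiniteIntegral_iff_norm]
  have heq : (fun ω => ENNReal.ofReal ‖g ω‖) = fun ω => ENNReal.ofReal (g ω) :=
    funext fun ω => by rw [Real.norm_eq_abs, abs_of_nonneg (h0 ω)]
  rw [show (∫⁻ ω, ENNReal.ofReal ‖g ω‖ ∂P) = ∫⁻ ω, ENNReal.ofReal (g ω) ∂P by rw [heq]]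
  exact h

lemma integrable_mul_orlicz {Φ : ℝ → ℝ} (hΦ : IsYoung Φ) {f g : Ω → ℝ}
    (hf : MemOrlicz P (conj Φ) f) (hg : MemOrlicz P Φ g) :
    Integrable (fun ω => f ω * g ω) P := by
  obtain ⟨hfm, l, hl, hfi⟩ := hf
  obtain ⟨hgm, m, hm, hgi⟩ := hg
  have h1 : Integrable (fun ω => conj Φ (l * f ω)) P :=
    integrable_of_nonneg_lintegral P
      (hΦ.conj_continuous.measurable.comp (hfm.const_mul l))
      (fun ω => hΦ.conj_nonneg _) hfi
  have h2 : Integrable (fun ω => Φ (m * g ω)) P :=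
    integrable_of_nonneg_lintegral P
      (hΦ.continuous.measurable.comp (hgm.const_mul m))
      (fun ω => hΦ.nonneg _) hgi
  have hG : Integrable (fun ω => (1/(l*m)) * (Φ (m * g ω) + conj Φ (l * f ω))) P :=
    (h2.add h1).const_mul _
  refine hG.mono' (hfm.mul hgm).aestronglyMeasurable (ae_of_all _ fun ω => ?_)
  have hy : |m * g ω| * |l * f ω| ≤ Φ (m * g ω) + conj Φ (l * f ω) := by
    calc |m * g ω| * |l * f ω| ≤ Φ |m * g ω| + conj Φ |l * f ω| := hΦ.young _ _
      _ = Φ (m * g ω) + conj Φ (l * f ω) := by rw [hΦ.map_abs, hΦ.conj_abs]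
  have hprod : |m * g ω| * |l * f ω| = (l * m) * |f ω * g ω| := by
    rw [abs_mul, abs_mul, abs_mul, abs_of_pos hm, abs_of_pos hl]; ring
  rw [Real.norm_eq_abs]
  rw [hprod] at hy
  have hlm : 0 < l * m := mul_pos hl hm
  have h5 : 1 / (l*m) * (l*m*|f ω*g ω|) = |f ω * g ω| := by field_simp
  have h6 := mul_le_mul_of_nonneg_left hy (le_of_lt (by positivity : (0:ℝ) < 1/(l*m)))
  linarith
  
lemma memOrlicz_bdd_mul {Φ : ℝ → ℝ} (hΦ : IsYoung Φ) {ζ b : Ω → ℝ}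
    (hζ : MemOrlicz P (conj Φ) ζ) (hb : Measurable b) {c : ℝ} (hc : ∀ ω, |b ω| ≤ c) :
    MemOrlicz P (conj Φ) (fun ω => b ω * ζ ω) := by
  obtain ⟨hζm, l, hl, hζi⟩ := hζ
  set c' := max c 0 with hc'
  have hc'0 : 0 ≤ c' := le_max_right _ _
  have hbc : ∀ ω, |b ω| ≤ c' := fun ω => le_max_of_le_left (hc ω)
  refine ⟨hb.mul hζm, l / (c' + 1), div_pos hl (by linarith), ?_⟩
  refine lt_of_le_of_lt ?_ hζi
  refine lintegral_mono fun ω => ENNReal.ofReal_le_ofReal (hΦ.conj_mono_abs ?_)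
  have h1 : |l / (c' + 1) * (b ω * ζ ω)| = (l / (c' + 1)) * |b ω| * |ζ ω| := by
    rw [abs_mul, abs_mul, abs_of_pos (div_pos hl (by linarith : (0:ℝ) < c' + 1))]
    ring
  have h2 : |l * ζ ω| = l * |ζ ω| := by rw [abs_mul, abs_of_pos hl]
  rw [h1, h2]
  have h3 : l / (c' + 1) * |b ω| ≤ l := by
    have := hbc ω
    rw [div_mul_eq_mul_div, div_le_iff₀ (by linarith : (0:ℝ) < c' + 1)]
    nlinarith [abs_nonneg (b ω)]
  exact mul_le_mul_of_nonneg_right h3 (abs_nonneg _)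

variable [IsProbabilityMeasure P]

lemma linf_ae_bound (b : Lp ℝ ∞ P) : ∀ᵐ ω ∂P, ‖(b : Ω → ℝ) ω‖ ≤ ‖b‖ := by
  filter_upwards [enorm_ae_le_eLpNormEssSup (b : Ω → ℝ) P] with ω hω
  rw [Lp.norm_def]
  have h1 : eLpNormEssSup (b : Ω → ℝ) P = eLpNorm (b : Ω → ℝ) ∞ P :=
    eLpNorm_exponent_top.symm
  calc ‖(b : Ω → ℝ) ω‖ = (‖(b : Ω → ℝ) ω‖ₑ).toReal := by simp
    _ ≤ (eLpNorm (b : Ω → ℝ) ∞ P).toReal :=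
        ENNReal.toReal_mono (Lp.eLpNorm_ne_top b) (h1 ▸ hω)

/-- Uniform boundedness: on a weakly compact set `A ⊆ L_Φ`, the integrals
`∫ ζ |η|` are uniformly bounded, for fixed `ζ ∈ L_{Φ*}`, `ζ ≥ 0`. -/
lemma unif_bound {Φ : ℝ → ℝ} (hΦ : IsYoung Φ) {A : Set ↥(Orlicz P Φ)}
    (hA : @IsCompact _ (weakT P (Orlicz P Φ) (Orlicz P (conj Φ))) A)
    {ζ : Ω → ℝ} (hζ : MemOrlicz P (conj Φ) ζ) (hζ0 : ∀ ω, 0 ≤ ζ ω) :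
    ∃ M : ℝ, 0 ≤ M ∧ ∀ η ∈ A, ∫ ω, ζ ω * |(η : Ω → ℝ) ω| ∂P ≤ M := by
  classical
  -- continuity of coordinate evaluations for the weak topology
  letI : TopologicalSpace ↥(Orlicz P Φ) := weakT P (Orlicz P Φ) (Orlicz P (conj Φ))
  have hcont : ∀ ξ : ↥(Orlicz P (conj Φ)),
      Continuous (fun η : ↥(Orlicz P Φ) => pairing P (η : Ω → ℝ) (ξ : Ω → ℝ)) := by
    intro ξ
    have heq : (fun η : ↥(Orlicz P Φ) => pairing P (η : Ω → ℝ) (ξ : Ω → ℝ))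
        = (fun v : ↥(Orlicz P (conj Φ)) → ℝ => v ξ) ∘
          (fun η : ↥(Orlicz P Φ) => fun ξ' : ↥(Orlicz P (conj Φ)) =>
            pairing P (η : Ω → ℝ) (ξ' : Ω → ℝ)) := rfl
    rw [heq]
    exact Continuous.comp (continuous_apply ξ) continuous_induced_dom
  -- the linear functionals
  have hgint : ∀ η : ↥(Orlicz P Φ), Integrable (fun ω => ζ ω * (η : Ω → ℝ) ω) P :=
    fun η => integrable_mul_orlicz P hΦ hζ η.2
  have hbint : ∀ (η : ↥(Orlicz P Φ)) (b : Lp ℝ ∞ P),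
      Integrable (fun ω => (b : Ω → ℝ) ω * (ζ ω * (η : Ω → ℝ) ω)) P := by
    intro η b
    exact (hgint η).bdd_mul (Lp.aestronglyMeasurable b) (linf_ae_bound P b)
  have hT : ∀ η : ↥(Orlicz P Φ), ∃ T : Lp ℝ ∞ P →L[ℝ] ℝ,
      ∀ b : Lp ℝ ∞ P, T b = ∫ ω, (b : Ω → ℝ) ω * (ζ ω * (η : Ω → ℝ) ω) ∂P := by
    intro η
    set L : Lp ℝ ∞ P →ₗ[ℝ] ℝ :=
      { toFun := fun b => ∫ ω, (b : Ω → ℝ) ω * (ζ ω * (η : Ω → ℝ) ω) ∂P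
        map_add' := by
          intro b b'
          have h1 : (((b + b') : Lp ℝ ∞ P) : Ω → ℝ) =ᵐ[P]
              (fun ω => (b : Ω → ℝ) ω + (b' : Ω → ℝ) ω) := Lp.coeFn_add b b'
          rw [integral_congr_ae (h1.mono fun ω hω => by rw [hω])]
          · simp only [add_mul]
            exact integral_add (hbint η b) (hbint η b')
        map_smul' := by
          intro r b
          have h1 : (((r • b) : Lp ℝ ∞ P) : Ω → ℝ) =ᵐ[P]
              (fun ω => r * (b : Ω → ℝ) ω) := Lp.coeFn_smul r b
          simp only [RingHom.id_apply]
          rw [integral_congr_ae (h1.mono fun ω hω => by rw [hω])]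
          simp only [mul_assoc]
          exact integral_smul r _ }
    refine ⟨L.mkContinuous (∫ ω, ζ ω * |(η : Ω → ℝ) ω| ∂P) ?_, fun b => rfl⟩
    intro b
    have habs : ∀ ω, ζ ω * |(η : Ω → ℝ) ω| = |ζ ω * (η : Ω → ℝ) ω| := fun ω => by
      rw [abs_mul, abs_of_nonneg (hζ0 ω)]
    calc ‖L b‖ = |∫ ω, (b : Ω → ℝ) ω * (ζ ω * (η : Ω → ℝ) ω) ∂P| := rfl
      _ ≤ ∫ ω, |(b : Ω → ℝ) ω * (ζ ω * (η : Ω → ℝ) ω)| ∂P :=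
          by
            have h := norm_integral_le_integral_norm (μ := P)
              (fun ω => (b : Ω → ℝ) ω * (ζ ω * (η : Ω → ℝ) ω))
            simpa only [Real.norm_eq_abs] using h
      _ ≤ ∫ ω, ‖b‖ * |ζ ω * (η : Ω → ℝ) ω| ∂P := by
          refine integral_mono_ae ((hbint η b).abs) (((hgint η).abs).const_mul _) ?_
          filter_upwards [linf_ae_bound P b] with ω hω
          rw [abs_mul]
          rw [Real.norm_eq_abs] at hω
          exact mul_le_mul_of_nonneg_right hω (abs_nonneg _)
      _ = ‖b‖ * ∫ ω, |ζ ω * (η : Ω → ℝ) ω| ∂P := by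
          simpa [smul_eq_mul] using
            integral_smul (μ := P) ‖b‖ (fun ω => |ζ ω * (η : Ω → ℝ) ω|)
      _ = (∫ ω, ζ ω * |(η : Ω → ℝ) ω| ∂P) * ‖b‖ := by
          rw [mul_comm]
          congr 1
          exact integral_congr_ae (ae_of_all _ fun ω => (habs ω).symm)
  choose T hTspec using hT
  -- pointwise boundedness on A, via weak compactness
  have hpt : ∀ b : Lp ℝ ∞ P, ∃ C : ℝ, ∀ η : ↥A, ‖T (η : ↥(Orlicz P Φ)) b‖ ≤ C := by
    intro b
    -- clamp a measurable representative of b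
    obtain ⟨f₀, hf₀meas, hf₀ae⟩ :
        ∃ f₀ : Ω → ℝ, Measurable f₀ ∧ (b : Ω → ℝ) =ᵐ[P] f₀ := by
      obtain ⟨g, hg, hgae⟩ := (Lp.aestronglyMeasurable b)
      exact ⟨g, hg.measurable, hgae⟩
    set b' : Ω → ℝ := fun ω => max (min (f₀ ω) ‖b‖) (-‖b‖) with hb'
    have hb'meas : Measurable b' := (hf₀meas.min measurable_const).max measurable_const
    have hb'bd : ∀ ω, |b' ω| ≤ ‖b‖ := by
      intro ω
      rw [abs_le]
      constructor
      · exact le_max_right _ _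
      · exact max_le (min_le_right _ _) (by linarith [norm_nonneg b])
    have hb'ae : (b : Ω → ℝ) =ᵐ[P] b' := by
      filter_upwards [hf₀ae, linf_ae_bound P b] with ω h1 h2
      rw [hb']
      simp only [← h1]
      rw [Real.norm_eq_abs, abs_le] at h2
      rw [min_eq_left h2.2, max_eq_left h2.1]
    have hξb : MemOrlicz P (conj Φ) (fun ω => b' ω * ζ ω) :=
      memOrlicz_bdd_mul P hΦ hζ hb'meas hb'bd
    set σb : ↥(Orlicz P (conj Φ)) := ⟨fun ω => b' ω * ζ ω, hξb⟩ with hσb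
    have hTb : ∀ η : ↥(Orlicz P Φ), T η b = pairing P (η : Ω → ℝ) (σb : Ω → ℝ) := by
      intro η
      rw [hTspec η b, pairing]
      rw [integral_congr_ae ((hb'ae.mono fun ω hω => ?_) :
        (fun ω => (b : Ω → ℝ) ω * (ζ ω * (η : Ω → ℝ) ω)) =ᵐ[P]
        (fun ω => (η : Ω → ℝ) ω * (σb : Ω → ℝ) ω))]
      show (b : Ω → ℝ) ω * (ζ ω * (η : Ω → ℝ) ω) = (η : Ω → ℝ) ω * (b' ω * ζ ω)
      rw [hω]; ring
    -- compact image in ℝ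
    have hA' : IsCompact A := hA
    have himg : IsCompact ((fun η : ↥(Orlicz P Φ) =>
        pairing P (η : Ω → ℝ) (σb : Ω → ℝ)) '' A) := hA'.image (hcont σb)
    obtain ⟨C, hC⟩ := himg.isBounded.exists_norm_le
    refine ⟨C, fun η => ?_⟩
    rw [hTb]
    exact hC _ ⟨(η : ↥(Orlicz P Φ)), η.2, rfl⟩
  -- Banach–Steinhaus
  have hbs : ∃ C' : ℝ, ∀ η : ↥A, ‖T (η : ↥(Orlicz P Φ))‖ ≤ C' := by
    apply banach_steinhaus
    intro b
    obtain ⟨C, hC⟩ := hpt b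
    exact ⟨C, hC⟩
  obtain ⟨C', hC'⟩ := hbs
  refine ⟨max C' 0, le_max_right _ _, ?_⟩
  intro η hη
  -- test against the sign of η
  set s : Ω → ℝ := fun ω => if 0 ≤ (η : Ω → ℝ) ω then 1 else -1 with hs
  have hsmeas : Measurable s := Measurable.ite (measurableSet_le measurable_const η.2.1)
    measurable_const measurable_const
  have hsbd : ∀ ω, ‖s ω‖ ≤ 1 := by
    intro ω
    by_cases h : 0 ≤ (η : Ω → ℝ) ω <;> simp [hs, h]
  have hsmem : MemLp s ∞ P :=
    memLp_top_of_bound hsmeas.aestronglyMeasurable 1 (ae_of_all _ hsbd)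
  set b : Lp ℝ ∞ P := hsmem.toLp s with hb
  have hbnorm : ‖b‖ ≤ 1 := by
    have := Lp.norm_le_of_ae_bound (f := b) zero_le_one
      ((hsmem.coeFn_toLp).mono fun ω hω => by rw [hω]; exact hsbd ω)
    simpa using this
  have hval : T η b = ∫ ω, ζ ω * |(η : Ω → ℝ) ω| ∂P := by
    rw [hTspec η b]
    refine integral_congr_ae ?_
    filter_upwards [hsmem.coeFn_toLp] with ω hω
    rw [hω, hs]
    show (if 0 ≤ (η : Ω → ℝ) ω then (1:ℝ) else -1) * (ζ ω * (η : Ω → ℝ) ω)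
      = ζ ω * |(η : Ω → ℝ) ω|
    rcases le_or_gt 0 ((η : Ω → ℝ) ω) with h | h
    · rw [if_pos h, abs_of_nonneg h]; ring
    · rw [if_neg (not_le.2 h), abs_of_neg h]; ring
  calc ∫ ω, ζ ω * |(η : Ω → ℝ) ω| ∂P = T η b := hval.symm
    _ ≤ ‖T η b‖ := le_abs_self _
    _ ≤ ‖T η‖ * ‖b‖ := (T η).le_opNorm b
    _ ≤ C' * 1 := mul_le_mul (hC' ⟨η, hη⟩) hbnorm (norm_nonneg _)
          (le_trans (norm_nonneg _) (hC' ⟨η, hη⟩))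
    _ ≤ max C' 0 := by simp


lemma exists_subseq_sup {Φ : ℝ → ℝ} (hΦ : IsYoung Φ)
    {ξ : ℕ → Ω → ℝ} (hmeas : ∀ n, Measurable (ξ n))
    (hprob : TendstoInMeasure P ξ atTop (fun _ => (0:ℝ)))
    (hui : UnifIntSeq P (fun n ω => conj Φ (ξ n ω))) :
    ∃ t : ℕ → ℕ, StrictMono t ∧
      (∀ᵐ ω ∂P, Tendsto (fun k => ξ (t k) ω) atTop (𝓝 0)) ∧
      (∀ᵐ ω ∂P, BddAbove (Set.range fun k => |ξ (t k) ω|)) ∧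
      (∫⁻ ω, ENNReal.ofReal (conj Φ (⨆ k, |ξ (t k) ω|)) ∂P) < ⊤ := by
  classical
  obtain ⟨s₀, hs₀mono, hs₀ae⟩ := hprob.exists_seq_tendsto_ae
  -- choose truncation levels
  rw [UnifIntSeq, ENNReal.tendsto_atTop_zero] at hui
  have hN : ∀ k : ℕ, ∃ N : ℕ, ∀ n : ℕ,
      ∫⁻ ω in {ω | (N : ℝ) < |conj Φ (ξ n ω)|}, ENNReal.ofReal |conj Φ (ξ n ω)| ∂P
        ≤ (2:ℝ≥0∞)⁻¹ ^ k := by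
    intro k
    obtain ⟨N, hNk⟩ := hui ((2:ℝ≥0∞)⁻¹ ^ k)
      (pos_iff_ne_zero.mpr (pow_ne_zero k (ENNReal.inv_ne_zero.2 ENNReal.ofNat_ne_top)))
    exact ⟨N, fun n => le_trans (le_iSup (fun n => ∫⁻ ω in {ω | ((N:ℕ) : ℝ) < |conj Φ (ξ n ω)|},
      ENNReal.ofReal |conj Φ (ξ n ω)| ∂P) n) (hNk N le_rfl)⟩
  choose N hNspec using hN
  -- extract subsequence with small bad-set probabilities
  have hev : ∀ k : ℕ, ∀ᶠ m in atTop,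
      P {ω | 1 ≤ dist (ξ (s₀ m) ω) ((fun _ => (0:ℝ)) ω)}
        ≤ ((N k : ℝ≥0∞) + 1)⁻¹ * (2:ℝ≥0∞)⁻¹ ^ k := by
    intro k
    have h1 : Tendsto (fun n => P {ω | 1 ≤ dist (ξ n ω) ((fun _ => (0:ℝ)) ω)}) atTop (𝓝 0) :=
      by simpa [edist_dist, ENNReal.one_le_ofReal] using hprob 1 one_pos
    have h2 := h1.comp (hs₀mono.tendsto_atTop)
    have hpos : (0:ℝ≥0∞) < ((N k : ℝ≥0∞) + 1)⁻¹ * (2:ℝ≥0∞)⁻¹ ^ k := by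
      refine pos_iff_ne_zero.mpr (mul_ne_zero (ENNReal.inv_ne_zero.2
        (ENNReal.add_ne_top.2 ⟨ENNReal.natCast_ne_top _, ENNReal.one_ne_top⟩))
        (pow_ne_zero k (ENNReal.inv_ne_zero.2 ENNReal.ofNat_ne_top)))
    filter_upwards [h2.eventually_lt_const hpos] with m hm using hm.le
  obtain ⟨φ, hφmono, hφspec⟩ := extraction_forall_of_eventually hev
  set t : ℕ → ℕ := s₀ ∘ φ with ht
  have htmono : StrictMono t := hs₀mono.comp hφmono
  -- the bad sets
  set S : ℕ → Set Ω := fun k => {ω | 1 ≤ |ξ (t k) ω|} with hS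
  have hSmeas : ∀ k, MeasurableSet (S k) :=
    fun k => measurableSet_le measurable_const (hmeas (t k)).abs
  have hPS : ∀ k, P (S k) ≤ ((N k : ℝ≥0∞) + 1)⁻¹ * (2:ℝ≥0∞)⁻¹ ^ k := by
    intro k
    have := hφspec k
    simpa [S, t, Real.dist_0_eq_abs] using this
  have hsum : (∑' k, P (S k)) ≠ ∞ := by
    have hle : ∀ k, P (S k) ≤ (2:ℝ≥0∞)⁻¹ ^ k := by
      intro k
      refine le_trans (hPS k) ?_
      have h1 : ((N k : ℝ≥0∞) + 1)⁻¹ ≤ 1 := by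
        rw [ENNReal.inv_le_one]
        exact le_add_self
      calc ((N k : ℝ≥0∞) + 1)⁻¹ * (2:ℝ≥0∞)⁻¹ ^ k ≤ 1 * (2:ℝ≥0∞)⁻¹ ^ k :=
            mul_le_mul_left h1 _
        _ = (2:ℝ≥0∞)⁻¹ ^ k := one_mul _
    refine ne_top_of_le_ne_top ?_ (ENNReal.tsum_le_tsum hle)
    rw [ENNReal.tsum_geometric]
    simp [ENNReal.one_sub_inv_two]
  have hBC : ∀ᵐ ω ∂P, ∀ᶠ k in atTop, ω ∉ S k := ae_eventually_notMem hsum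
  -- a.e. convergence along t
  have haet : ∀ᵐ ω ∂P, Tendsto (fun k => ξ (t k) ω) atTop (𝓝 0) := by
    filter_upwards [hs₀ae] with ω hω
    exact hω.comp hφmono.tendsto_atTop
  -- bddAbove
  have hbdd : ∀ᵐ ω ∂P, BddAbove (Set.range fun k => |ξ (t k) ω|) := by
    filter_upwards [hBC] with ω hω
    obtain ⟨K, hK⟩ := eventually_atTop.1 hω
    refine ⟨max 1 ((Finset.range (K+1)).sup' (by simp) (fun i => |ξ (t i) ω|)), ?_⟩
    rintro - ⟨k, rfl⟩
    rcases le_or_gt k K with hk | hk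
    · exact le_max_of_le_right (Finset.le_sup' (fun i => |ξ (t i) ω|) (Finset.mem_range.2 (Nat.lt_succ_of_le hk)))
    · have := hK k hk.le
      simp only [S, mem_setOf_eq, not_le] at this
      exact le_max_of_le_left this.le
  refine ⟨t, htmono, haet, hbdd, ?_⟩
  -- the key pointwise bound
  have key : ∀ᵐ ω ∂P, ENNReal.ofReal (conj Φ (⨆ k, |ξ (t k) ω|))
      ≤ ENNReal.ofReal (conj Φ 1)
        + ∑' k, (S k).indicator (fun ω => ENNReal.ofReal (conj Φ (ξ (t k) ω))) ω := by
    filter_upwards [hbdd] with ω hω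
    set a : ℕ → ℝ := fun k => |ξ (t k) ω| with ha
    have ha0 : ∀ k, 0 ≤ a k := fun k => abs_nonneg _
    set g : ℝ → ℝ≥0∞ := fun x => ENNReal.ofReal (conj Φ (max x 0)) with hg
    have hgmono : Monotone g := by
      intro u v huv
      exact ENNReal.ofReal_le_ofReal (hΦ.conj_mono (le_max_right _ _)
        (max_le_max huv le_rfl))
    have hgcont : Continuous g :=
      ENNReal.continuous_ofReal.comp (hΦ.conj_continuous.comp (continuous_id.max continuous_const))
    have hiS : g (⨆ k, a k) = ⨆ k, g (a k) :=
      hgmono.map_ciSup_of_continuousAt hgcont.continuousAt hω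
    have hsup0 : max (⨆ k, a k) 0 = ⨆ k, a k :=
      max_eq_left (le_trans (ha0 0) (le_ciSup hω 0))
    have step : ENNReal.ofReal (conj Φ (⨆ k, a k)) = ⨆ k, g (a k) := by
      rw [← hiS, hg]; simp only [hsup0]
    rw [step]
    refine iSup_le fun k => ?_
    have hak : g (a k) = ENNReal.ofReal (conj Φ (ξ (t k) ω)) := by
      rw [hg]
      simp only [max_eq_left (ha0 k)]
      rw [ha]
      simp only []
      rw [hΦ.conj_abs]
    by_cases hωk : ω ∈ S k
    · refine le_trans ?_ le_add_self
      refine le_trans ?_ (ENNReal.le_tsum k)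
      rw [Set.indicator_of_mem hωk, hak]
    · have h1 : a k ≤ 1 := by
        simp only [S, mem_setOf_eq, not_le] at hωk
        exact hωk.le
      have : g (a k) ≤ ENNReal.ofReal (conj Φ 1) := by
        rw [hg]
        exact ENNReal.ofReal_le_ofReal (hΦ.conj_mono (le_max_right _ _)
          (by rw [max_eq_left (ha0 k)]; exact h1))
      exact le_trans this le_self_add
  calc ∫⁻ ω, ENNReal.ofReal (conj Φ (⨆ k, |ξ (t k) ω|)) ∂P
      ≤ ∫⁻ ω, (ENNReal.ofReal (conj Φ 1)
        + ∑' k, (S k).indicator (fun ω => ENNReal.ofReal (conj Φ (ξ (t k) ω))) ω) ∂P :=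
        lintegral_mono_ae key
    _ = ENNReal.ofReal (conj Φ 1)
        + ∫⁻ ω, (∑' k, (S k).indicator (fun ω => ENNReal.ofReal (conj Φ (ξ (t k) ω))) ω) ∂P := by
        rw [lintegral_add_left measurable_const, lintegral_const, measure_univ, mul_one]
    _ = ENNReal.ofReal (conj Φ 1)
        + ∑' k, ∫⁻ ω, (S k).indicator (fun ω => ENNReal.ofReal (conj Φ (ξ (t k) ω))) ω ∂P := by
        rw [lintegral_tsum]
        intro k
        exact ((ENNReal.measurable_ofReal.comp
          ((hΦ.conj_continuous.measurable).comp (hmeas (t k)))).indicator (hSmeas k)).aemeasurable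
    _ < ⊤ := by
        rw [ENNReal.add_lt_top]
        constructor
        · exact ENNReal.ofReal_lt_top
        · have hbd : ∀ k, ∫⁻ ω, (S k).indicator
              (fun ω => ENNReal.ofReal (conj Φ (ξ (t k) ω))) ω ∂P
              ≤ (2:ℝ≥0∞)⁻¹ ^ k + (2:ℝ≥0∞)⁻¹ ^ k := by
            intro k
            rw [lintegral_indicator (hSmeas k)]
            set T : Set Ω := {ω | ((N k : ℕ) : ℝ) < |conj Φ (ξ (t k) ω)|} with hT
            have hTmeas : MeasurableSet T :=
              measurableSet_lt measurable_const
                ((hΦ.conj_continuous.measurable).comp (hmeas (t k))).abs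
            have hsplit : S k ⊆ (S k ∩ Tᶜ) ∪ T := by
              intro ω hω
              by_cases hωT : ω ∈ T
              · exact Or.inr hωT
              · exact Or.inl ⟨hω, hωT⟩
            calc ∫⁻ ω in S k, ENNReal.ofReal (conj Φ (ξ (t k) ω)) ∂P
                ≤ ∫⁻ ω in (S k ∩ Tᶜ) ∪ T, ENNReal.ofReal (conj Φ (ξ (t k) ω)) ∂P :=
                  lintegral_mono_set hsplit
              _ ≤ ∫⁻ ω in S k ∩ Tᶜ, ENNReal.ofReal (conj Φ (ξ (t k) ω)) ∂P
                  + ∫⁻ ω in T, ENNReal.ofReal (conj Φ (ξ (t k) ω)) ∂P := lintegral_union_le _ _ _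
              _ ≤ (2:ℝ≥0∞)⁻¹ ^ k + (2:ℝ≥0∞)⁻¹ ^ k := by
                  gcongr
                  · -- small part
                    have hptwise : ∀ ω ∈ S k ∩ Tᶜ,
                        ENNReal.ofReal (conj Φ (ξ (t k) ω)) ≤ (N k : ℝ≥0∞) := by
                      intro ω hω
                      have : ¬ (((N k : ℕ):ℝ) < |conj Φ (ξ (t k) ω)|) := hω.2
                      rw [not_lt] at this
                      rw [abs_of_nonneg (hΦ.conj_nonneg _)] at this
                      calc ENNReal.ofReal (conj Φ (ξ (t k) ω)) ≤ ENNReal.ofReal ((N k : ℕ):ℝ) :=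
                            ENNReal.ofReal_le_ofReal this
                        _ = (N k : ℝ≥0∞) := by simp
                    calc ∫⁻ ω in S k ∩ Tᶜ, ENNReal.ofReal (conj Φ (ξ (t k) ω)) ∂P
                        ≤ ∫⁻ _ in S k ∩ Tᶜ, (N k : ℝ≥0∞) ∂P := by
                          apply setLIntegral_mono' ((hSmeas k).inter hTmeas.compl) hptwise
                      _ = (N k : ℝ≥0∞) * P (S k ∩ Tᶜ) := by rw [setLIntegral_const]
                      _ ≤ (N k : ℝ≥0∞) * P (S k) :=
                          mul_le_mul_right (measure_mono inter_subset_left) _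
                      _ ≤ (N k : ℝ≥0∞) * (((N k : ℝ≥0∞) + 1)⁻¹ * (2:ℝ≥0∞)⁻¹ ^ k) :=
                          mul_le_mul_right (hPS k) _
                      _ ≤ ((N k : ℝ≥0∞) + 1) * (((N k : ℝ≥0∞) + 1)⁻¹ * (2:ℝ≥0∞)⁻¹ ^ k) :=
                          mul_le_mul_left le_self_add _
                      _ = (2:ℝ≥0∞)⁻¹ ^ k := by
                          rw [← mul_assoc, ENNReal.mul_inv_cancel (by simp)
                            (ENNReal.add_ne_top.2 ⟨ENNReal.natCast_ne_top _, ENNReal.one_ne_top⟩), one_mul]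
                  · -- tail part via UI
                    have := hNspec k (t k)
                    refine le_trans (le_of_eq ?_) this
                    congr 1
                    ext ω
                    rw [abs_of_nonneg (hΦ.conj_nonneg _)]
          calc (∑' k, ∫⁻ ω, (S k).indicator
              (fun ω => ENNReal.ofReal (conj Φ (ξ (t k) ω))) ω ∂P)
              ≤ ∑' k, ((2:ℝ≥0∞)⁻¹ ^ k + (2:ℝ≥0∞)⁻¹ ^ k) := ENNReal.tsum_le_tsum hbd
            _ < ⊤ := by
                rw [ENNReal.tsum_add, ENNReal.tsum_geometric]
                simp [ENNReal.one_sub_inv_two]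


lemma unif_small {Φ : ℝ → ℝ} (hΦ : IsYoung Φ) {A : Set ↥(Orlicz P Φ)}
    (hA : @IsCompact _ (weakT P (Orlicz P Φ) (Orlicz P (conj Φ))) A)
    {ζ : Ω → ℝ} (hζ : MemOrlicz P (conj Φ) ζ) (hζ0 : ∀ ω, 0 ≤ ζ ω)
    {M₀ : ℝ} (hM : ∀ η ∈ A, ∫ ω, ζ ω * |(η : Ω → ℝ) ω| ∂P ≤ M₀)
    {C : ℕ → Set Ω} (hCmeas : ∀ j, MeasurableSet (C j)) (hCanti : Antitone C)
    (hCnull : ∀ᵐ ω ∂P, ∀ᶠ j in atTop, ω ∉ C j)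
    {ε : ℝ} (hε : 0 < ε) :
    ∃ J : ℕ, ∀ j ≥ J, ∀ η ∈ A, ∫ ω in C j, ζ ω * |(η : Ω → ℝ) ω| ∂P ≤ ε := by
  classical
  letI : TopologicalSpace ↥(Orlicz P Φ) := weakT P (Orlicz P Φ) (Orlicz P (conj Φ))
  have hcont : ∀ ξ : ↥(Orlicz P (conj Φ)),
      Continuous (fun η : ↥(Orlicz P Φ) => pairing P (η : Ω → ℝ) (ξ : Ω → ℝ)) := by
    intro ξ
    have heq : (fun η : ↥(Orlicz P Φ) => pairing P (η : Ω → ℝ) (ξ : Ω → ℝ))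
        = (fun v : ↥(Orlicz P (conj Φ)) → ℝ => v ξ) ∘
          (fun η : ↥(Orlicz P Φ) => fun ξ' : ↥(Orlicz P (conj Φ)) =>
            pairing P (η : Ω → ℝ) (ξ' : Ω → ℝ)) := rfl
    rw [heq]
    exact Continuous.comp (continuous_apply ξ) continuous_induced_dom
  -- the dominating integrable functions
  have hgI : ∀ η : ↥(Orlicz P Φ), Integrable (fun ω => ζ ω * |(η : Ω → ℝ) ω|) P := by
    intro η
    have h1 : Integrable (fun ω => ζ ω * (η : Ω → ℝ) ω) P :=
      integrable_mul_orlicz P hΦ hζ η.2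
    refine h1.abs.congr (ae_of_all _ fun ω => ?_)
    simp only [abs_mul, abs_of_nonneg (hζ0 ω)]
  have hg0 : ∀ (η : ↥(Orlicz P Φ)) (ω : Ω), 0 ≤ ζ ω * |(η : Ω → ℝ) ω| :=
    fun η ω => mul_nonneg (hζ0 ω) (abs_nonneg _)
  -- per-η convergence
  have hper : ∀ η : ↥(Orlicz P Φ),
      Tendsto (fun j => ∫ ω in C j, ζ ω * |(η : Ω → ℝ) ω| ∂P) atTop (𝓝 0) := by
    intro η
    have h0 : (0:ℝ) = ∫ ω, (0:ℝ) ∂P := by simp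
    rw [h0]
    have := tendsto_integral_of_dominated_convergence
      (F := fun j => (C j).indicator (fun ω => ζ ω * |(η : Ω → ℝ) ω|))
      (f := fun _ => (0:ℝ)) (bound := fun ω => ζ ω * |(η : Ω → ℝ) ω|)
      (fun j => ((hgI η).aestronglyMeasurable).indicator (hCmeas j))
      (hgI η)
      (fun j => ae_of_all _ fun ω => by
        by_cases h : ω ∈ C j
        · simp only [Real.norm_eq_abs, Set.indicator_of_mem h, abs_of_nonneg (hg0 η ω)]
          exact le_rfl
        · simp only [Real.norm_eq_abs, Set.indicator_of_notMem h]
          simp [hg0 η ω])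
      (by
        filter_upwards [hCnull] with ω hω
        refine Tendsto.congr' ?_ tendsto_const_nhds
        filter_upwards [hω] with j hj
        simp only [Set.indicator_of_notMem hj])
    refine Tendsto.congr (fun j => ?_) this
    rw [integral_indicator (hCmeas j)]
  by_contra hcon
  push_neg at hcon
  -- hcon : ∀ J, ∃ j ≥ J, ∃ η ∈ A, ε < ∫ _ in C j ...
  have hsel : ∀ J : ℕ, ∃ j : ℕ, J ≤ j ∧ ∃ η : ↥(Orlicz P Φ), η ∈ A ∧
      ε < ∫ ω in C j, ζ ω * |(η : Ω → ℝ) ω| ∂P := by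
    intro J
    obtain ⟨j, hj, η, hη, hlt⟩ := hcon J
    exact ⟨j, hj, η, hη, hlt⟩
  choose jf hjf ηf hηfA hηflt using hsel
  -- strictly monotone sequence of levels with witnesses
  set Jr : ℕ → ℕ := fun r => Nat.rec 0 (fun _ prev => jf prev + 1) r with hJr
  have hJr_succ : ∀ r, Jr (r+1) = jf (Jr r) + 1 := fun r => rfl
  set jr : ℕ → ℕ := fun r => jf (Jr r) with hjr
  have hjrmono : StrictMono jr := by
    have hstep : ∀ r, jr r < jr (r+1) := by
      intro r
      calc jr r < jf (Jr r) + 1 := Nat.lt_succ_self _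
        _ = Jr (r+1) := (hJr_succ r).symm
        _ ≤ jf (Jr (r+1)) := hjf _
        _ = jr (r+1) := rfl
    exact strictMono_nat_of_lt_succ hstep
  set ηr : ℕ → ↥(Orlicz P Φ) := fun r => ηf (Jr r) with hηr
  have hηrA : ∀ r, ηr r ∈ A := fun r => hηfA _
  have hηrlt : ∀ r, ε < ∫ ω in C (jr r), ζ ω * |(ηr r : Ω → ℝ) ω| ∂P := fun r => hηflt _
  -- extraction σ with small next-tail
  have hnext : ∀ i : ℕ, ∀ s : ℕ, ∃ s' : ℕ, s < s' ∧
      ∫ ω in C (jr s'), ζ ω * |(ηr i : Ω → ℝ) ω| ∂P ≤ ε/4 := by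
    intro i s
    have h1 : Tendsto (fun r => ∫ ω in C (jr r), ζ ω * |(ηr i : Ω → ℝ) ω| ∂P) atTop (𝓝 0) :=
      (hper (ηr i)).comp hjrmono.tendsto_atTop
    have h2 : ∀ᶠ r in atTop, ∫ ω in C (jr r), ζ ω * |(ηr i : Ω → ℝ) ω| ∂P ≤ ε/4 := by
      have h3 := h1.eventually (eventually_lt_nhds (show (0:ℝ) < ε/4 by linarith))
      exact h3.mono fun r hr => hr.le
    obtain ⟨s', hs'1, hs'2⟩ := (h2.and (eventually_gt_atTop s)).exists
    exact ⟨s', hs'2, hs'1⟩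
  choose nxt hnxt1 hnxt2 using hnext
  set σ : ℕ → ℕ := fun i => Nat.rec 0 (fun _ prev => nxt prev prev) i with hσ
  have hσsucc : ∀ i, σ (i+1) = nxt (σ i) (σ i) := fun i => rfl
  have hσmono : StrictMono σ :=
    strictMono_nat_of_lt_succ (fun i => by rw [hσsucc]; exact hnxt1 _ _)
  have hσsmall : ∀ i, ∫ ω in C (jr (σ (i+1))), ζ ω * |(ηr (σ i) : Ω → ℝ) ω| ∂P ≤ ε/4 :=
    fun i => by rw [hσsucc]; exact hnxt2 _ _
  set e : ℕ → ↥(Orlicz P Φ) := fun i => ηr (σ i) with he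
  have heA : ∀ i, e i ∈ A := fun i => hηrA _
  set D : ℕ → Set Ω := fun i => C (jr (σ i)) \ C (jr (σ (i+1))) with hD
  have hDmeas : ∀ i, MeasurableSet (D i) := fun i => (hCmeas _).diff (hCmeas _)
  have hDsub : ∀ i, D i ⊆ C (jr (σ i)) := fun i => diff_subset
  have hCsub : ∀ {i i'}, i ≤ i' → C (jr (σ i')) ⊆ C (jr (σ i)) :=
    fun h => hCanti (hjrmono.monotone (hσmono.monotone h))
  have hDdisj : ∀ {i i'}, i ≠ i' → Disjoint (D i) (D i') := by
    have key : ∀ {i i'}, i < i' → Disjoint (D i) (D i') := by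
      intro i i' h
      refine Set.disjoint_left.2 fun ω hωi hωi' => ?_
      exact hωi.2 (hCsub (Nat.succ_le_of_lt h) (hDsub i' hωi'))
    intro i i' h
    rcases h.lt_or_gt with h | h
    · exact key h
    · exact (key h).symm
  have hDlow : ∀ i, ε - ε/4 ≤ ∫ ω in D i, ζ ω * |(e i : Ω → ℝ) ω| ∂P := by
    intro i
    have hsub : C (jr (σ (i+1))) ⊆ C (jr (σ i)) := hCsub (Nat.le_succ i)
    have hunion : D i ∪ C (jr (σ (i+1))) = C (jr (σ i)) := Set.diff_union_of_subset hsub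
    have hdisj : Disjoint (D i) (C (jr (σ (i+1)))) := disjoint_sdiff_left
    have hsplit : ∫ ω in C (jr (σ i)), ζ ω * |(e i : Ω → ℝ) ω| ∂P
        = (∫ ω in D i, ζ ω * |(e i : Ω → ℝ) ω| ∂P)
          + ∫ ω in C (jr (σ (i+1))), ζ ω * |(e i : Ω → ℝ) ω| ∂P := by
      rw [← setIntegral_union hdisj (hCmeas _) ((hgI (e i)).integrableOn)
        ((hgI (e i)).integrableOn), hunion]
    have h1 : ε < ∫ ω in C (jr (σ i)), ζ ω * |(e i : Ω → ℝ) ω| ∂P := hηrlt (σ i)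
    have h2 := hσsmall i
    rw [he]
    simp only []
    rw [hD] at hsplit ⊢
    simp only [] at hsplit ⊢
    linarith [hsplit, h1, h2]
  -- the ℝ≥0∞ matrix and Rosenthal's lemma
  set F : ℕ → Ω → ℝ≥0∞ := fun i ω => ENNReal.ofReal (ζ ω * |(e i : Ω → ℝ) ω|) with hF
  set a : ℕ → ℕ → ℝ≥0∞ := fun i m => ∫⁻ ω in D m, F i ω ∂P with ha
  have hrowM : ∀ i, ∑' m, a i m ≤ ENNReal.ofReal M₀ := by
    intro i
    have h1 : ∑' m, a i m = ∫⁻ ω in ⋃ m, D m, F i ω ∂P :=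
      (lintegral_iUnion hDmeas (fun m m' h => hDdisj h) (F i)).symm
    calc ∑' m, a i m = ∫⁻ ω in ⋃ m, D m, F i ω ∂P := h1
      _ ≤ ∫⁻ ω, F i ω ∂P := setLIntegral_le_lintegral _ _
      _ = ENNReal.ofReal (∫ ω, ζ ω * |(e i : Ω → ℝ) ω| ∂P) :=
          (ofReal_integral_eq_lintegral_ofReal (hgI (e i))
            (ae_of_all _ (hg0 (e i)))).symm
      _ ≤ ENNReal.ofReal M₀ := ENNReal.ofReal_le_ofReal (hM _ (heA i))
  obtain ⟨Mset, hMinf, hMros⟩ := rosenthal (K := ENNReal.ofReal M₀) ENNReal.ofReal_ne_top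
    a hrowM (ε := ENNReal.ofReal (ε/8))
    (by rw [Ne, ENNReal.ofReal_eq_zero]; push_neg; linarith) ENNReal.ofReal_ne_top
  haveI : Infinite ↥Mset := Set.infinite_coe_iff.mpr hMinf
  set u : ℕ ↪o ℕ := Nat.orderEmbeddingOfSet Mset with hu
  have humem : ∀ r, u r ∈ Mset := fun r => by
    have := Nat.orderEmbeddingOfSet_range Mset
    rw [← this]
    exact ⟨r, rfl⟩
  have humono : StrictMono u := u.strictMono
  -- sign decomposition sets
  set Up : ℕ → Set Ω := fun T => ⋃ i, ⋃ (_ : T ≤ i),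
    (D (u i) ∩ {ω | 0 ≤ (e (u i) : Ω → ℝ) ω}) with hUp
  set Um : ℕ → Set Ω := fun T => ⋃ i, ⋃ (_ : T ≤ i),
    (D (u i) ∩ {ω | (e (u i) : Ω → ℝ) ω < 0}) with hUm
  have hUpmeas : ∀ T, MeasurableSet (Up T) := fun T =>
    MeasurableSet.iUnion fun i => MeasurableSet.iUnion fun _ =>
      (hDmeas _).inter (measurableSet_le measurable_const (e (u i)).2.1)
  have hUmmeas : ∀ T, MeasurableSet (Um T) := fun T =>
    MeasurableSet.iUnion fun i => MeasurableSet.iUnion fun _ =>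
      (hDmeas _).inter (measurableSet_lt (e (u i)).2.1 measurable_const)
  have hUpUm : ∀ T, Disjoint (Up T) (Um T) := by
    intro T
    refine Set.disjoint_left.2 fun ω hωp hωm => ?_
    simp only [hUp, hUm, Set.mem_iUnion] at hωp hωm
    obtain ⟨i, hi, hωD, hω0⟩ := hωp
    obtain ⟨i', hi', hωD', hωneg⟩ := hωm
    rcases eq_or_ne i i' with rfl | hne
    · have h1 : 0 ≤ (e (u i) : Ω → ℝ) ω := hω0
      have h2 : (e (u i) : Ω → ℝ) ω < 0 := hωneg
      linarith
    · exact (hDdisj (fun h => hne (humono.injective h))).ne_of_mem hωD hωD' rfl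
  set bT : ℕ → Ω → ℝ := fun T ω =>
    (Up T).indicator (fun _ => (1:ℝ)) ω - (Um T).indicator (fun _ => (1:ℝ)) ω with hbT
  have hbTmeas : ∀ T, Measurable (bT T) := fun T =>
    (measurable_const.indicator (hUpmeas T)).sub (measurable_const.indicator (hUmmeas T))
  have hbTbd : ∀ T ω, |bT T ω| ≤ 1 := by
    intro T ω
    by_cases hp : ω ∈ Up T
    · have hm : ω ∉ Um T := fun hm => (hUpUm T).ne_of_mem hp hm rfl
      simp [hbT, Set.indicator_of_mem hp, Set.indicator_of_notMem hm]
    · by_cases hm : ω ∈ Um T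
      · simp [hbT, Set.indicator_of_mem hm, Set.indicator_of_notMem hp]
      · simp [hbT, Set.indicator_of_notMem hp, Set.indicator_of_notMem hm]
  -- bT vanishes outside ⋃_{i ≥ T} D (u i)
  have hbTsupp : ∀ T ω, bT T ω ≠ 0 → ω ∈ ⋃ i, ⋃ (_ : T ≤ i), D (u i) := by
    intro T ω hne
    by_cases hp : ω ∈ Up T
    · simp only [hUp, Set.mem_iUnion] at hp
      obtain ⟨i, hi, hωD, -⟩ := hp
      exact Set.mem_iUnion.2 ⟨i, Set.mem_iUnion.2 ⟨hi, hωD⟩⟩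
    · by_cases hm : ω ∈ Um T
      · simp only [hUm, Set.mem_iUnion] at hm
        obtain ⟨i, hi, hωD, -⟩ := hm
        exact Set.mem_iUnion.2 ⟨i, Set.mem_iUnion.2 ⟨hi, hωD⟩⟩
      · exact absurd (by simp [hbT, Set.indicator_of_notMem hp,
          Set.indicator_of_notMem hm]) hne
  -- bT equals the sign of e (u r) on D (u r)
  have hbTsign : ∀ T r, T ≤ r → ∀ ω ∈ D (u r),
      bT T ω * (e (u r) : Ω → ℝ) ω = |(e (u r) : Ω → ℝ) ω| := by
    intro T r hTr ω hω
    rcases le_or_gt 0 ((e (u r) : Ω → ℝ) ω) with hsgn | hsgn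
    · have hp : ω ∈ Up T := Set.mem_iUnion.2 ⟨r, Set.mem_iUnion.2 ⟨hTr, hω, hsgn⟩⟩
      have hm : ω ∉ Um T := fun hm => (hUpUm T).ne_of_mem hp hm rfl
      simp [hbT, Set.indicator_of_mem hp, Set.indicator_of_notMem hm, abs_of_nonneg hsgn]
    · have hm : ω ∈ Um T := Set.mem_iUnion.2 ⟨r, Set.mem_iUnion.2 ⟨hTr, hω, hsgn⟩⟩
      have hp : ω ∉ Up T := fun hp => (hUpUm T).ne_of_mem hp hm rfl
      simp only [hbT, Set.indicator_of_mem hm, Set.indicator_of_notMem hp]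
      rw [abs_of_neg hsgn]; ring
  -- the test functions
  set ξT : ℕ → Ω → ℝ := fun T ω => bT T ω * ζ ω with hξT
  have hmemT : ∀ T, MemOrlicz P (conj Φ) (ξT T) :=
    fun T => memOrlicz_bdd_mul P hΦ hζ (hbTmeas T) (hbTbd T)
  have hfint : ∀ (T : ℕ) (η : ↥(Orlicz P Φ)),
      Integrable (fun ω => (η : Ω → ℝ) ω * ξT T ω) P := by
    intro T η
    have h1 : Integrable (fun ω => ζ ω * (η : Ω → ℝ) ω) P :=
      integrable_mul_orlicz P hΦ hζ η.2
    have h2 := h1.bdd_mul ((hbTmeas T).aestronglyMeasurable)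
      (ae_of_all _ fun ω => by rw [Real.norm_eq_abs]; exact hbTbd T ω)
    refine h2.congr (ae_of_all _ fun ω => ?_)
    simp only [hξT]; ring
  -- off-diagonal bound from Rosenthal's lemma
  have hW : ∀ T r, T ≤ r →
      ∫ ω in (⋃ (i : {i : ℕ // T ≤ i ∧ i ≠ r}), D (u (i : ℕ))),
        ζ ω * |(e (u r) : Ω → ℝ) ω| ∂P ≤ ε/8 := by
    intro T r hTr
    set W := ⋃ (i : {i : ℕ // T ≤ i ∧ i ≠ r}), D (u (i : ℕ)) with hWdef
    have hWmeas : MeasurableSet W := MeasurableSet.iUnion fun i => hDmeas _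
    have h0 : (0:ℝ) ≤ ε/8 := by linarith
    rw [← ENNReal.ofReal_le_ofReal_iff h0]
    have hIO : IntegrableOn (fun ω => ζ ω * |(e (u r) : Ω → ℝ) ω|) W P :=
      (hgI (e (u r))).integrableOn
    rw [ofReal_integral_eq_lintegral_ofReal hIO
      (ae_restrict_of_ae (ae_of_all _ (hg0 (e (u r)))))]
    have hdisj' : Pairwise (Function.onFun Disjoint
        (fun i : {i : ℕ // T ≤ i ∧ i ≠ r} => D (u (i : ℕ)))) := by
      intro i i' hne
      exact hDdisj fun h => hne (Subtype.ext (humono.injective h))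
    rw [show (∫⁻ ω in W, ENNReal.ofReal (ζ ω * |(e (u r) : Ω → ℝ) ω|) ∂P)
        = ∫⁻ ω in W, F (u r) ω ∂P from rfl]
    rw [hWdef, lintegral_iUnion (fun i => hDmeas _) hdisj' (F (u r))]
    have hterm : ∀ i : {i : ℕ // T ≤ i ∧ i ≠ r},
        (∫⁻ ω in D (u (i : ℕ)), F (u r) ω ∂P)
          = (Mset \ {u r}).indicator (a (u r)) (u (i : ℕ)) := by
      intro i
      rw [Set.indicator_of_mem]
      constructor
      · exact humem _
      · simp only [Set.mem_singleton_iff]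
        exact fun h => i.2.2 (humono.injective h)
    calc (∑' i : {i : ℕ // T ≤ i ∧ i ≠ r}, ∫⁻ ω in D (u (i : ℕ)), F (u r) ω ∂P)
        = ∑' i : {i : ℕ // T ≤ i ∧ i ≠ r},
            (Mset \ {u r}).indicator (a (u r)) (u (i : ℕ)) := tsum_congr hterm
      _ ≤ ∑' m, (Mset \ {u r}).indicator (a (u r)) m :=
          ENNReal.tsum_comp_le_tsum_of_injective
            (humono.injective.comp Subtype.val_injective) _
      _ ≤ ENNReal.ofReal (ε/8) := hMros (u r) (humem r)
  -- lower bound for the pairings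
  have hpair_low : ∀ T r, T ≤ r → ε/2 ≤ pairing P ((e (u r) : ↥(Orlicz P Φ)) : Ω → ℝ) (ξT T) := by
    intro T r hTr
    set η : ↥(Orlicz P Φ) := e (u r) with hη
    set f : Ω → ℝ := fun ω => (η : Ω → ℝ) ω * ξT T ω with hf
    have hfi : Integrable f P := hfint T η
    have hsplit : ∫ ω, f ω ∂P
        = (∫ ω in D (u r), f ω ∂P) + ∫ ω in (D (u r))ᶜ, f ω ∂P :=
      (integral_add_compl (hDmeas _) hfi).symm
    have hDeq : ∫ ω in D (u r), f ω ∂P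
        = ∫ ω in D (u r), ζ ω * |(η : Ω → ℝ) ω| ∂P := by
      refine setIntegral_congr_fun (hDmeas _) (fun ω hω => ?_)
      have hsgn := hbTsign T r hTr ω hω
      simp only [hf, hξT]
      calc (η : Ω → ℝ) ω * (bT T ω * ζ ω)
          = ζ ω * (bT T ω * (η : Ω → ℝ) ω) := by ring
        _ = ζ ω * |(η : Ω → ℝ) ω| := by rw [hsgn]
    set W := ⋃ (i : {i : ℕ // T ≤ i ∧ i ≠ r}), D (u (i : ℕ)) with hWdef
    have hWmeas : MeasurableSet W := MeasurableSet.iUnion fun i => hDmeas _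
    have hzero : ∀ ω ∈ (D (u r))ᶜ \ W, f ω = 0 := by
      rintro ω ⟨hω1, hω2⟩
      by_contra hne
      have hbne : bT T ω ≠ 0 := by
        intro h
        apply hne
        simp only [hf, hξT, h]
        ring
      obtain ⟨i, hi⟩ := Set.mem_iUnion.1 (hbTsupp T ω hbne)
      obtain ⟨hiT, hωD⟩ := Set.mem_iUnion.1 hi
      rcases eq_or_ne i r with rfl | hir
      · exact hω1 hωD
      · exact hω2 (Set.mem_iUnion.2 ⟨⟨i, hiT, hir⟩, hωD⟩)
    have hcompl_eq : ∫ ω in (D (u r))ᶜ, f ω ∂P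
        = ∫ ω in (D (u r))ᶜ ∩ W, f ω ∂P := by
      have h1 : ∫ ω in (D (u r))ᶜ, f ω ∂P
          = (∫ ω in (D (u r))ᶜ ∩ W, f ω ∂P) + ∫ ω in (D (u r))ᶜ \ W, f ω ∂P := by
        conv_lhs => rw [show (D (u r))ᶜ = ((D (u r))ᶜ ∩ W) ∪ ((D (u r))ᶜ \ W) from
          (Set.inter_union_diff _ _).symm]
        exact setIntegral_union (disjoint_sdiff_right.mono_left inter_subset_right)
          ((hDmeas _).compl.diff hWmeas) hfi.integrableOn hfi.integrableOn
      rw [h1, setIntegral_eq_zero_of_forall_eq_zero hzero, add_zero]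
    have habs : |∫ ω in (D (u r))ᶜ ∩ W, f ω ∂P| ≤ ε/8 := by
      have h1 : |∫ ω in (D (u r))ᶜ ∩ W, f ω ∂P|
          ≤ ∫ ω in (D (u r))ᶜ ∩ W, |f ω| ∂P := by
        have := norm_integral_le_integral_norm (μ := P.restrict ((D (u r))ᶜ ∩ W)) f
        simpa only [Real.norm_eq_abs] using this
      have h2 : ∫ ω in (D (u r))ᶜ ∩ W, |f ω| ∂P
          ≤ ∫ ω in (D (u r))ᶜ ∩ W, ζ ω * |(η : Ω → ℝ) ω| ∂P := by
        refine setIntegral_mono_on (hfi.abs.integrableOn) ((hgI η).integrableOn)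
          ((hDmeas _).compl.inter hWmeas) (fun ω _ => ?_)
        simp only [hf, hξT, abs_mul]
        calc |(η : Ω → ℝ) ω| * (|bT T ω| * |ζ ω|)
            ≤ |(η : Ω → ℝ) ω| * (1 * |ζ ω|) := by
              refine mul_le_mul_of_nonneg_left ?_ (abs_nonneg _)
              exact mul_le_mul_of_nonneg_right (hbTbd T ω) (abs_nonneg _)
          _ = ζ ω * |(η : Ω → ℝ) ω| := by rw [abs_of_nonneg (hζ0 ω)]; ring
      have h3 : ∫ ω in (D (u r))ᶜ ∩ W, ζ ω * |(η : Ω → ℝ) ω| ∂P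
          ≤ ∫ ω in W, ζ ω * |(η : Ω → ℝ) ω| ∂P := by
        refine setIntegral_mono_set ((hgI η).integrableOn)
          (ae_restrict_of_ae (ae_of_all _ (hg0 η)))
          (HasSubset.Subset.eventuallyLE inter_subset_right)
      exact le_trans h1 (le_trans h2 (le_trans h3 (hW T r hTr)))
    have hlow : ε - ε/4 ≤ ∫ ω in D (u r), f ω ∂P := by
      rw [hDeq]; exact hDlow (u r)
    have hpairf : pairing P (η : Ω → ℝ) (ξT T) = ∫ ω, f ω ∂P := rfl
    rw [hpairf, hsplit, hcompl_eq]
    have := abs_le.1 habs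
    linarith [this.1]
  -- a weak cluster point of the sequence in A
  set G : ℕ → ↥(Orlicz P Φ) := fun r => e (u r) with hG
  have hGA : ∀ r, G r ∈ A := fun r => heA _
  set U : Ultrafilter ℕ := Filter.hyperfilter ℕ with hU
  have hUle : ↑(U.map G) ≤ 𝓟 A := by
    rw [le_principal_iff]
    exact Filter.mem_map.mpr (Filter.univ_mem' hGA)
  obtain ⟨ηbar, hηbarA, hηbarle⟩ := hA.ultrafilter_le_nhds (U.map G) hUle
  have hGtends : Tendsto G ↑U (𝓝 ηbar) := hηbarle
  have hlim : ∀ T, ε/2 ≤ pairing P (ηbar : Ω → ℝ) (ξT T) := by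
    intro T
    have h1 : Tendsto (fun r => pairing P ((G r : ↥(Orlicz P Φ)) : Ω → ℝ)
        ((⟨ξT T, hmemT T⟩ : ↥(Orlicz P (conj Φ))) : Ω → ℝ)) ↑U
        (𝓝 (pairing P (ηbar : Ω → ℝ)
          ((⟨ξT T, hmemT T⟩ : ↥(Orlicz P (conj Φ))) : Ω → ℝ))) :=
      ((hcont ⟨ξT T, hmemT T⟩).tendsto ηbar).comp hGtends
    refine ge_of_tendsto h1 ?_
    have hev : {r : ℕ | T ≤ r} ∈ (U : Filter ℕ) := by
      have h1 : {r : ℕ | r < T}ᶜ ∈ Filter.hyperfilter ℕ :=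
        Filter.compl_mem_hyperfilter_of_finite (Set.finite_lt_nat T)
      rw [hU]
      refine Filter.mem_of_superset h1 fun r hr => ?_
      have hr' : ¬ r < T := hr
      exact not_lt.1 hr'
    exact Filter.mem_of_superset hev (fun r hr => hpair_low T r hr)
  -- dominated convergence kills the limit
  have hto0 : Tendsto (fun T => pairing P (ηbar : Ω → ℝ) (ξT T)) atTop (𝓝 0) := by
    have h0 : (0:ℝ) = ∫ ω, (0:ℝ) ∂P := by simp
    rw [show (fun T => pairing P (ηbar : Ω → ℝ) (ξT T))
      = fun T => ∫ ω, (ηbar : Ω → ℝ) ω * ξT T ω ∂P from rfl, h0]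
    refine tendsto_integral_of_dominated_convergence
      (bound := fun ω => ζ ω * |(ηbar : Ω → ℝ) ω|)
      (fun T => (hfint T ηbar).aestronglyMeasurable) (hgI ηbar) ?_ ?_
    · intro T
      refine ae_of_all _ fun ω => ?_
      rw [Real.norm_eq_abs]
      simp only [hξT, abs_mul]
      calc |(ηbar : Ω → ℝ) ω| * (|bT T ω| * |ζ ω|)
          ≤ |(ηbar : Ω → ℝ) ω| * (1 * |ζ ω|) := by
            refine mul_le_mul_of_nonneg_left ?_ (abs_nonneg _)
            exact mul_le_mul_of_nonneg_right (hbTbd T ω) (abs_nonneg _)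
        _ = ζ ω * |(ηbar : Ω → ℝ) ω| := by rw [abs_of_nonneg (hζ0 ω)]; ring
    · filter_upwards [hCnull] with ω hω
      rcases (eventually_atTop.1 hω) with ⟨J₀, hJ₀⟩
      refine Tendsto.congr' ?_ tendsto_const_nhds
      rw [Filter.eventuallyEq_iff_exists_mem]
      refine ⟨{T | J₀ ≤ T}, mem_atTop J₀, fun T hT => ?_⟩
      have hb0 : bT T ω = 0 := by
        by_contra hne
        obtain ⟨i, hi⟩ := Set.mem_iUnion.1 (hbTsupp T ω hne)
        obtain ⟨hiT, hωD⟩ := Set.mem_iUnion.1 hi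
        have h1 : ω ∈ C (jr (σ (u i))) := hDsub _ hωD
        have h2 : J₀ ≤ jr (σ (u i)) := by
          have ha1 : (i:ℕ) ≤ u i := humono.le_apply
          have ha2 : (u i) ≤ σ (u i) := hσmono.le_apply
          have ha3 : σ (u i) ≤ jr (σ (u i)) := hjrmono.le_apply
          have hT' : (J₀ : ℕ) ≤ T := hT
          omega
        exact hJ₀ _ h2 h1
      show (0:ℝ) = (ηbar : Ω → ℝ) ω * ξT T ω
      simp only [hξT, hb0]
      ring
  have hε2 : ε/2 ≤ 0 := ge_of_tendsto hto0 (Filter.Eventually.of_forall hlim)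
  linarith


end Aux2

/-- If `Φ ∈ Δ₂`, `ξ_n → 0` in probability and
`(Φ*(ξ_n))_n` is uniformly integrable, then some subsequence satisfies
`sup_k |ξ_{n_k}| ∈ L_{Φ*}`, and the whole sequence converges to `0` in the
Mackey topology `τ(L_{Φ*},L_Φ)`. -/
theorem statement10
    {Ω : Type*} [MeasurableSpace Ω] (P : Measure Ω) [IsProbabilityMeasure P]
    (Φ : ℝ → ℝ) (hΦ : IsYoung Φ) (hΔ : Delta2 Φ)
    (ξ : ℕ → Ω → ℝ) (hmem : ∀ n, MemOrlicz P (conj Φ) (ξ n))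
    (hprob : TendstoInMeasure P ξ atTop (fun _ => (0 : ℝ)))
    (hui : UnifIntSeq P (fun n ω => conj Φ (ξ n ω))) :
    (∃ n : ℕ → ℕ, StrictMono n ∧ supMem P (conj Φ) (fun k => ξ (n k))) ∧
      ∃ hz : (fun _ : Ω => (0 : ℝ)) ∈ Orlicz P (conj Φ),
        Tendsto (fun n => (⟨ξ n, hmem n⟩ : Orlicz P (conj Φ))) atTop
          (@nhds _ (mackeyT P (Orlicz P (conj Φ)) (Orlicz P Φ))
            ⟨fun _ => 0, hz⟩) := by
  classical
  constructor
  · -- Part 1 : order-bounded subsequence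
    obtain ⟨t, htmono, hae, hbdd, hlint⟩ :=
      exists_subseq_sup P hΦ (fun n => (hmem n).1) hprob hui
    refine ⟨t, htmono, hbdd, Measurable.iSup (fun k => (hmem (t k)).1.abs),
      1, one_pos, ?_⟩
    simpa using hlint
  · -- Part 2 : Mackey convergence
    have hz : (fun _ : Ω => (0:ℝ)) ∈ Orlicz P (conj Φ) := by
      refine ⟨measurable_const, 1, one_pos, ?_⟩
      simp [hΦ.conj_zero]
    refine ⟨hz, ?_⟩
    have hnh : @nhds _ (mackeyT P (Orlicz P (conj Φ)) (Orlicz P Φ))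
        (⟨fun _ => 0, hz⟩ : ↥(Orlicz P (conj Φ)))
        = Filter.comap
            (fun ξ' : ↥(Orlicz P (conj Φ)) =>
              UniformOnFun.ofFun (dualSets P (Orlicz P (conj Φ)) (Orlicz P Φ))
                (fun η : ↥(Orlicz P Φ) => pairing P (ξ' : Ω → ℝ) (η : Ω → ℝ)))
            (𝓝 (UniformOnFun.ofFun (dualSets P (Orlicz P (conj Φ)) (Orlicz P Φ))
              (fun η : ↥(Orlicz P Φ) =>
                pairing P (fun _ => (0:ℝ)) (η : Ω → ℝ)))) := nhds_induced _ _
    rw [hnh, Filter.tendsto_comap_iff]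
    rw [UniformOnFun.tendsto_iff_tendstoUniformlyOn]
    intro A hA
    rw [Metric.tendstoUniformlyOn_iff]
    intro ε hε
    by_contra hcc
    rw [Filter.not_eventually] at hcc
    have hsel : ∀ N : ℕ, ∃ n : ℕ, N ≤ n ∧ ∃ η : ↥(Orlicz P Φ), η ∈ A ∧
        ε ≤ |pairing P (ξ n) (η : Ω → ℝ)| := by
      intro N
      obtain ⟨n, hn1, hn2⟩ := (Filter.frequently_atTop.1 hcc) N
      push_neg at hn2
      obtain ⟨η, hηA, hηd⟩ := hn2
      refine ⟨n, hn1, η, hηA, ?_⟩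
      have h0 : pairing P (fun _ : Ω => (0:ℝ)) (η : Ω → ℝ) = 0 := by
        simp [pairing]
      calc ε ≤ dist (pairing P (fun _ : Ω => (0:ℝ)) (η : Ω → ℝ))
            (pairing P (ξ n) (η : Ω → ℝ)) := hηd
        _ = |pairing P (ξ n) (η : Ω → ℝ)| := by
            rw [h0, Real.dist_eq, zero_sub, abs_neg]
    choose nf hnf ηn hηnA hηnd using hsel
    set Mr : ℕ → ℕ := fun r => Nat.rec 0 (fun _ prev => nf prev + 1) r with hMr
    have hMr_succ : ∀ r, Mr (r+1) = nf (Mr r) + 1 := fun r => rfl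
    set Nr : ℕ → ℕ := fun r => nf (Mr r) with hNrdef
    have hNrmono : StrictMono Nr := by
      refine strictMono_nat_of_lt_succ fun r => ?_
      calc Nr r < Nr r + 1 := Nat.lt_succ_self _
        _ = Mr (r+1) := (hMr_succ r).symm
        _ ≤ nf (Mr (r+1)) := hnf _
        _ = Nr (r+1) := rfl
    set ξ' : ℕ → Ω → ℝ := fun r => ξ (Nr r) with hξ'
    set η' : ℕ → ↥(Orlicz P Φ) := fun r => ηn (Mr r) with hη'
    have hη'A : ∀ r, η' r ∈ A := fun r => hηnA _
    have hprop : ∀ r, ε ≤ |pairing P (ξ' r) ((η' r : ↥(Orlicz P Φ)) : Ω → ℝ)| :=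
      fun r => hηnd (Mr r)
    have hprob' : TendstoInMeasure P ξ' atTop (fun _ => (0:ℝ)) :=
      fun δ hδ => (hprob δ hδ).comp hNrmono.tendsto_atTop
    have hui' : UnifIntSeq P (fun r ω => conj Φ (ξ' r ω)) := by
      refine tendsto_of_tendsto_of_tendsto_of_le_of_le tendsto_const_nhds hui
        (fun N => zero_le) (fun N => ?_)
      exact iSup_comp_le (fun n => ∫⁻ ω in {ω | (N : ℝ) < |conj Φ (ξ n ω)|},
        ENNReal.ofReal |conj Φ (ξ n ω)| ∂P) Nr
    obtain ⟨t, htmono, hae, hbdd, hlint⟩ :=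
      exists_subseq_sup P hΦ (fun r => (hmem (Nr r)).1) hprob' hui'
    set ζ : Ω → ℝ := fun ω => ⨆ k, |ξ' (t k) ω| with hζdef
    have hζmeas : Measurable ζ := Measurable.iSup (fun k => (hmem (Nr (t k))).1.abs)
    have hζ0 : ∀ ω, 0 ≤ ζ ω := fun ω => Real.iSup_nonneg (fun k => abs_nonneg _)
    have hζmem : MemOrlicz P (conj Φ) ζ := ⟨hζmeas, 1, one_pos, by simpa using hlint⟩
    set ζt : Ω → ℝ := fun ω => ζ ω + 1 with hζtdef
    have hζt0 : ∀ ω, 0 ≤ ζt ω := fun ω => by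
      have := hζ0 ω
      simp only [hζtdef]
      linarith
    have hζtmem : MemOrlicz P (conj Φ) ζt := by
      refine ⟨hζmeas.add_const 1, 1/2, by norm_num, ?_⟩
      have hptw : ∀ ω, conj Φ (1/2 * ζt ω) ≤ 1/2 * conj Φ (ζ ω) + 1/2 * conj Φ 1 := by
        intro ω
        have h1 := hΦ.conj_convexOn.2 (mem_univ (ζ ω)) (mem_univ (1:ℝ))
          (by norm_num : (0:ℝ) ≤ 1/2) (by norm_num : (0:ℝ) ≤ 1/2) (by norm_num)
        simp only [smul_eq_mul] at h1
        have h2 : 1/2 * ζt ω = 1/2 * ζ ω + 1/2 * 1 := by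
          simp only [hζtdef]; ring
        rw [h2]
        exact h1
      calc ∫⁻ ω, ENNReal.ofReal (conj Φ (1/2 * ζt ω)) ∂P
          ≤ ∫⁻ ω, (ENNReal.ofReal (1/2 * conj Φ (ζ ω))
              + ENNReal.ofReal (1/2 * conj Φ 1)) ∂P := by
            refine lintegral_mono fun ω => ?_
            exact le_trans (ENNReal.ofReal_le_ofReal (hptw ω)) ENNReal.ofReal_add_le
        _ = (∫⁻ ω, ENNReal.ofReal (1/2 * conj Φ (ζ ω)) ∂P)
            + ENNReal.ofReal (1/2 * conj Φ 1) := by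
            rw [lintegral_add_right _ measurable_const, lintegral_const,
              measure_univ, mul_one]
        _ < ⊤ := by
            rw [ENNReal.add_lt_top]
            constructor
            · refine lt_of_le_of_lt ?_ hlint
              refine lintegral_mono fun ω => ENNReal.ofReal_le_ofReal ?_
              have h3 := hΦ.conj_nonneg (ζ ω)
              have h4 : conj Φ (ζ ω) = conj Φ (⨆ k, |ξ' (t k) ω|) := rfl
              linarith [h4 ▸ h3]
            · exact ENNReal.ofReal_lt_top
    obtain ⟨M, hM0, hMb⟩ := unif_bound P hΦ hA.2.2 hζtmem hζt0
    set δ : ℝ := ε/(4*(M+1)) with hδdef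
    have hδpos : 0 < δ := by
      rw [hδdef]
      positivity
    set Cs : ℕ → Set Ω := fun k => ⋃ i, ⋃ (_ : k ≤ i), {ω | δ ≤ |ξ' (t i) ω|} with hCsdef
    have hCmeas : ∀ k, MeasurableSet (Cs k) := fun k =>
      MeasurableSet.iUnion fun i => MeasurableSet.iUnion fun _ =>
        measurableSet_le measurable_const (hmem (Nr (t i))).1.abs
    have hCanti : Antitone Cs := by
      intro k k' hkk'
      refine Set.iUnion_subset fun i => Set.iUnion_subset fun hi => ?_
      exact Set.subset_iUnion_of_subset i (Set.subset_iUnion_of_subset (le_trans hkk' hi)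
        (subset_refl _))
    have hCnull : ∀ᵐ ω ∂P, ∀ᶠ j in atTop, ω ∉ Cs j := by
      filter_upwards [hae] with ω hω
      have h1 : ∀ᶠ k in atTop, |ξ' (t k) ω| < δ := by
        have h2 := hω.abs
        rw [abs_zero] at h2
        exact h2.eventually (eventually_lt_nhds hδpos)
      obtain ⟨K, hK⟩ := eventually_atTop.1 h1
      rw [eventually_atTop]
      refine ⟨K, fun j hj hmem' => ?_⟩
      obtain ⟨i, hi⟩ := Set.mem_iUnion.1 hmem'
      obtain ⟨hij, hωi⟩ := Set.mem_iUnion.1 hi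
      have h3 : |ξ' (t i) ω| < δ := hK i (le_trans hj hij)
      have h4 : δ ≤ |ξ' (t i) ω| := hωi
      linarith
    obtain ⟨J, hJ⟩ := unif_small P hΦ hA.2.2 hζtmem hζt0 hMb hCmeas hCanti hCnull
      (show (0:ℝ) < ε/4 by linarith)
    -- the contradiction at index J
    set ηJ : ↥(Orlicz P Φ) := η' (t J) with hηJ
    have hεle : ε ≤ |pairing P (ξ' (t J)) (ηJ : Ω → ℝ)| := hprop (t J)
    have hint : Integrable (fun ω => ξ' (t J) ω * (ηJ : Ω → ℝ) ω) P :=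
      integrable_mul_orlicz P hΦ (hmem (Nr (t J))) ηJ.2
    have hζtI : Integrable (fun ω => ζt ω * |(ηJ : Ω → ℝ) ω|) P := by
      have h1 : Integrable (fun ω => ζt ω * (ηJ : Ω → ℝ) ω) P :=
        integrable_mul_orlicz P hΦ hζtmem ηJ.2
      refine h1.abs.congr (ae_of_all _ fun ω => ?_)
      simp only [abs_mul, abs_of_nonneg (hζt0 ω)]
    have habs : |pairing P (ξ' (t J)) (ηJ : Ω → ℝ)|
        ≤ ∫ ω, |ξ' (t J) ω * (ηJ : Ω → ℝ) ω| ∂P := by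
      have h1 := norm_integral_le_integral_norm (μ := P)
        (fun ω => ξ' (t J) ω * (ηJ : Ω → ℝ) ω)
      simpa only [Real.norm_eq_abs, pairing] using h1
    have hsplit : ∫ ω, |ξ' (t J) ω * (ηJ : Ω → ℝ) ω| ∂P
        = (∫ ω in Cs J, |ξ' (t J) ω * (ηJ : Ω → ℝ) ω| ∂P)
          + ∫ ω in (Cs J)ᶜ, |ξ' (t J) ω * (ηJ : Ω → ℝ) ω| ∂P :=
      (integral_add_compl (hCmeas J) hint.abs).symm
    -- on the complement, ξ' (t J) is small
    have hc1 : ∫ ω in (Cs J)ᶜ, |ξ' (t J) ω * (ηJ : Ω → ℝ) ω| ∂P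
        ≤ δ * ∫ ω, ζt ω * |(ηJ : Ω → ℝ) ω| ∂P := by
      have hstep : ∫ ω in (Cs J)ᶜ, |ξ' (t J) ω * (ηJ : Ω → ℝ) ω| ∂P
          ≤ ∫ ω in (Cs J)ᶜ, δ * (ζt ω * |(ηJ : Ω → ℝ) ω|) ∂P := by
        refine setIntegral_mono_on hint.abs.integrableOn
          ((hζtI.const_mul δ).integrableOn) (hCmeas J).compl (fun ω hω => ?_)
        have hsm : |ξ' (t J) ω| < δ := by
          by_contra hge
          push_neg at hge
          exact hω (Set.mem_iUnion.2 ⟨J, Set.mem_iUnion.2 ⟨le_rfl, hge⟩⟩)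
        rw [abs_mul]
        have h1 : |(ηJ : Ω → ℝ) ω| ≤ ζt ω * |(ηJ : Ω → ℝ) ω| := by
          have h2 : (1:ℝ) ≤ ζt ω := by
            have := hζ0 ω
            simp only [hζtdef]
            linarith
          nlinarith [abs_nonneg ((ηJ : Ω → ℝ) ω)]
        nlinarith [abs_nonneg ((ηJ : Ω → ℝ) ω), abs_nonneg (ξ' (t J) ω), hδpos.le,
          mul_le_mul_of_nonneg_right hsm.le (abs_nonneg ((ηJ : Ω → ℝ) ω)),
          mul_le_mul_of_nonneg_left h1 hδpos.le]
      refine le_trans hstep ?_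
      have h3 : ∫ ω in (Cs J)ᶜ, δ * (ζt ω * |(ηJ : Ω → ℝ) ω|) ∂P
          ≤ ∫ ω, δ * (ζt ω * |(ηJ : Ω → ℝ) ω|) ∂P := by
        refine setIntegral_le_integral (hζtI.const_mul δ) (ae_of_all _ fun ω => ?_)
        show (0:ℝ) ≤ δ * (ζt ω * |(ηJ : Ω → ℝ) ω|)
        exact mul_nonneg hδpos.le (mul_nonneg (hζt0 ω) (abs_nonneg _))
      refine le_trans h3 (le_of_eq ?_)
      simpa [smul_eq_mul] using integral_smul (μ := P) δ
        (fun ω => ζt ω * |(ηJ : Ω → ℝ) ω|)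
    -- on Cs J, dominate by ζt
    have hc2 : ∫ ω in Cs J, |ξ' (t J) ω * (ηJ : Ω → ℝ) ω| ∂P
        ≤ ∫ ω in Cs J, ζt ω * |(ηJ : Ω → ℝ) ω| ∂P := by
      refine integral_mono_ae hint.abs.integrableOn hζtI.integrableOn ?_
      refine ae_restrict_of_ae ?_
      filter_upwards [hbdd] with ω hω
      rw [abs_mul]
      have h1 : |ξ' (t J) ω| ≤ ζ ω := le_ciSup hω J
      have h2 : ζ ω ≤ ζt ω := by simp only [hζtdef]; linarith
      exact mul_le_mul_of_nonneg_right (le_trans h1 h2) (abs_nonneg _)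
    have hc2' : ∫ ω in Cs J, ζt ω * |(ηJ : Ω → ℝ) ω| ∂P ≤ ε/4 :=
      hJ J le_rfl ηJ (hη'A (t J))
    have hδM : δ * ∫ ω, ζt ω * |(ηJ : Ω → ℝ) ω| ∂P ≤ ε/4 := by
      have h1 : ∫ ω, ζt ω * |(ηJ : Ω → ℝ) ω| ∂P ≤ M := hMb ηJ (hη'A (t J))
      have h2 : δ * ∫ ω, ζt ω * |(ηJ : Ω → ℝ) ω| ∂P ≤ δ * M :=
        mul_le_mul_of_nonneg_left h1 hδpos.le
      refine le_trans h2 ?_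
      rw [hδdef]
      rw [div_mul_eq_mul_div, div_le_iff₀ (by positivity : (0:ℝ) < 4*(M+1))]
      nlinarith
    linarith [hεle, habs, hsplit, hc1, hc2, hc2', hδM]


end OrliczPaper
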